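/- arXiv:1901.06774 — 9 statements merged into one kernel-verified Lean document; each statement's English description precedes it below -/
import Mathlib

section
/- If S and T are doubly commuting isometries on a Hilbert space (i.e. ST = TS and ST* = T*S), then SS* + TT* − (ST)(ST)* = SS* + T(I − SS*)T*, and this operator is an orthogonal projection. -/
set_option synthInstance.maxHeartbeats 800000
set_option maxHeartbeats 1000000

open ContinuousLinearMap

/-- If `S`, `T` are doubly commuting isometries, then
`SS* + TT* − (ST)(ST)* = SS* + T(I − SS*)T*`, and this operator is an orthogonal projection. -/
theorem doubly_commuting_isometries_projection {H : Type*} [NormedAddCommGroup H]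
    [InnerProductSpace ℂ H] [CompleteSpace H] (S T : H →L[ℂ] H)
    (hS : adjoint S ∘L S = 1) (hT : adjoint T ∘L T = 1)
    (hcomm : S ∘L T = T ∘L S)
    (hdcomm : S ∘L adjoint T = adjoint T ∘L S)
    (P : H →L[ℂ] H)
    (hP : P = S ∘L adjoint S + T ∘L adjoint T - (S ∘L T) ∘L adjoint (S ∘L T)) :
    P = S ∘L adjoint S + T ∘L (1 - S ∘L adjoint S) ∘L adjoint T ∧
      P ∘L P = P ∧ IsSelfAdjoint P := by
  simp only [← star_eq_adjoint, ← mul_def] at *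
  -- derived commutation relations
  have h3 : star S * T = T * star S := by
    have := congrArg star hdcomm
    simpa [star_mul, mul_comm] using this.symm
  have h4 : star S * star T = star T * star S := by
    have := congrArg star hcomm
    simpa [star_mul] using this.symm
  -- set p = S S*, q = T T*
  have hps : star (S * star S) = S * star S := by simp [star_mul]
  have hqs : star (T * star T) = T * star T := by simp [star_mul]
  have hpp : (S * star S) * (S * star S) = S * star S := by
    calc (S * star S) * (S * star S) = S * (star S * S) * star S := by noncomm_ring
    _ = S * star S := by rw [hS]; noncomm_ring
  have hqq : (T * star T) * (T * star T) = T * star T := by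
    calc (T * star T) * (T * star T) = T * (star T * T) * star T := by noncomm_ring
    _ = T * star T := by rw [hT]; noncomm_ring
  have hpq : (S * star S) * (T * star T) = (T * star T) * (S * star S) := by
    calc (S * star S) * (T * star T) = S * (star S * T) * star T := by noncomm_ring
      _ = (S * T) * (star S * star T) := by rw [h3]; noncomm_ring
      _ = (T * S) * (star T * star S) := by rw [hcomm, h4]
      _ = T * (S * star T) * star S := by noncomm_ring
      _ = (T * star T) * (S * star S) := by rw [hdcomm]; noncomm_ring
  -- the (ST)(ST)* term equals q p
  have hst : (S * T) * star (S * T) = (T * star T) * (S * star S) := by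
    rw [star_mul]
    calc S * T * (star T * star S) = S * (T * star T) * star S := by noncomm_ring
      _ = (T * star T) * S * star S := by
            have : S * (T * star T) = (T * star T) * S := by
              calc S * (T * star T) = (S * T) * star T := by noncomm_ring
                _ = T * (S * star T) := by rw [hcomm]; noncomm_ring
                _ = (T * star T) * S := by rw [hdcomm]; noncomm_ring
            rw [this]
      _ = (T * star T) * (S * star S) := by noncomm_ring
  -- second form equals q - q p
  have hTp : T * (1 - S * star S) * star T
      = T * star T - (T * star T) * (S * star S) := by
    have h5 : star S * star T = star (T * S) := by rw [star_mul]
    calc T * (1 - S * star S) * star T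
        = T * star T - T * (S * star S) * star T := by noncomm_ring
      _ = T * star T - (T * S) * (star S * star T) := by noncomm_ring
      _ = T * star T - (S * T) * (star T * star S) := by rw [hcomm, h4]
      _ = T * star T - (T * star T) * (S * star S) := by
            rw [← star_mul, hst]
  have hP1 : P = S * star S + T * (1 - S * star S) * star T := by
    rw [hP, hst, hTp]; noncomm_ring
  refine ⟨hP1, ?_, ?_⟩
  · rw [hP, hst]
    generalize hp : S * star S = p at hpp hpq
    generalize hq : T * star T = q at hqq hpq
    have h1 : p * (q * p) = q * p := by rw [← mul_assoc, hpq, mul_assoc, hpp]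
    have h2 : q * (q * p) = q * p := by rw [← mul_assoc, hqq]
    have h3 : (q * p) * p = q * p := by rw [mul_assoc, hpp]
    have h4 : (q * p) * q = q * p := by rw [mul_assoc, hpq, ← mul_assoc, hqq]
    have h5 : (q * p) * (q * p) = q * p := by rw [mul_assoc, h1, h2]
    calc (p + q - q * p) * (p + q - q * p)
        = p * p + p * q - p * (q * p) + (q * p + q * q - q * (q * p))
            - ((q * p) * p + (q * p) * q - (q * p) * (q * p)) := by noncomm_ring
      _ = p + (q * p) - (q * p) + ((q * p) + q - (q * p))
            - ((q * p) + (q * p) - (q * p)) := by rw [hpp, hqq, hpq, h1, h2, h3, h4, h5]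
      _ = p + q - q * p := by abel
  · rw [hP1, hTp]
    rw [IsSelfAdjoint]
    simp only [star_sub, star_add, star_mul, hps, hqs]
    rw [hpq]
end

section
/- Let A : H → G be a bounded linear operator between Hilbert spaces and u ∈ G. Then u ∈ ran A if and only if γ := sup{ |⟨y, u⟩| / ‖A*y‖ : y ∈ G, A*y ≠ 0 } is finite; moreover, in that case the minimal preimage norm min{‖x‖ : Ax = u} equals γ. -/
/-!
If `‖⟪y, u⟫‖ ≤ γ ‖A† y‖` for all `y`, then `A† y ↦ ⟪u, y⟫` is a well-defined functional of norm
at most `γ` on `range A†`. Extended to `H` by Hahn–Banach and represented by Riesz as `⟪x, ·⟫`,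
it yields `x` with `A x = u` and `‖x‖ ≤ γ`. Conversely, Cauchy–Schwarz gives
`‖⟪y, A x⟫‖ = ‖⟪A† y, x⟫‖ ≤ ‖x‖ ‖A† y‖` for every preimage `x`, so the least `γ` and the least
preimage norm coincide.
-/

open ContinuousLinearMap

open scoped InnerProductSpace

theorem LinearMap.exists_comp_rangeRestrict_eq_of_ker_le {R M M₂ M₃ : Type*} [Ring R]
    [AddCommGroup M] [Module R M] [AddCommGroup M₂] [Module R M₂] [AddCommGroup M₃] [Module R M₃]
    (T : M →ₗ[R] M₂) (f : M →ₗ[R] M₃) (h : LinearMap.ker T ≤ LinearMap.ker f) :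
    ∃ φ : LinearMap.range T →ₗ[R] M₃, φ ∘ₗ T.rangeRestrict = f :=
  ⟨(LinearMap.ker T).liftQ f h ∘ₗ T.quotKerEquivRange.symm.toLinearMap, LinearMap.ext fun y ↦ by
    simp [LinearMap.rangeRestrict, LinearMap.codRestrict,
      LinearMap.quotKerEquivRange_symm_apply_image]⟩

theorem exists_strongDual_comp_eq_of_norm_le {𝕜 E F : Type*} [RCLike 𝕜] [AddCommGroup E]
    [Module 𝕜 E] [NormedAddCommGroup F] [NormedSpace 𝕜 F] (T : E →ₗ[𝕜] F) (f : E →ₗ[𝕜] 𝕜)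
    {γ : ℝ} (hγ : 0 ≤ γ) (h : ∀ y, ‖f y‖ ≤ γ * ‖T y‖) :
    ∃ g : StrongDual 𝕜 F, (∀ y, g (T y) = f y) ∧ ‖g‖ ≤ γ := by
  have hker : LinearMap.ker T ≤ LinearMap.ker f := fun y hy ↦ by
    simpa [show T y = 0 from hy] using h y
  obtain ⟨φ, hφ⟩ := T.exists_comp_rangeRestrict_eq_of_ker_le f hker
  have hφ_apply (y : E) : φ (T.rangeRestrict y) = f y := LinearMap.congr_fun hφ y
  have hφ_bound (v : LinearMap.range T) : ‖φ v‖ ≤ γ * ‖v‖ := by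
    obtain ⟨y, rfl⟩ := T.surjective_rangeRestrict v
    simpa [hφ_apply] using h y
  obtain ⟨g, hg, hg_norm⟩ := exists_extension_norm_eq _ (φ.mkContinuous γ hφ_bound)
  refine ⟨g, fun y ↦ ?_, hg_norm ▸ LinearMap.mkContinuous_norm_le φ hγ hφ_bound⟩
  rw [← hφ_apply]
  exact hg (T.rangeRestrict y)

section Hilbert

variable {𝕜 H G : Type*} [RCLike 𝕜] [NormedAddCommGroup H] [InnerProductSpace 𝕜 H]
  [CompleteSpace H] [NormedAddCommGroup G] [InnerProductSpace 𝕜 G] [CompleteSpace G]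

theorem ContinuousLinearMap.norm_inner_le_norm_mul_norm_adjoint_apply (A : H →L[𝕜] G)
    {x : H} {u : G} (hx : A x = u) (y : G) : ‖⟪y, u⟫_𝕜‖ ≤ ‖x‖ * ‖adjoint A y‖ := by
  rw [← hx, ← adjoint_inner_left, mul_comm]
  exact norm_inner_le_norm _ _

theorem ContinuousLinearMap.exists_apply_eq_norm_le_of_norm_inner_le (A : H →L[𝕜] G) (u : G)
    {γ : ℝ} (hγ : 0 ≤ γ) (h : ∀ y, ‖⟪y, u⟫_𝕜‖ ≤ γ * ‖adjoint A y‖) :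
    ∃ x, A x = u ∧ ‖x‖ ≤ γ := by
  obtain ⟨g, hg, hg_norm⟩ := exists_strongDual_comp_eq_of_norm_le (adjoint A).toLinearMap
    (innerSL 𝕜 u).toLinearMap hγ fun y ↦ by simpa [norm_inner_symm] using h y
  refine ⟨(InnerProductSpace.toDual 𝕜 H).symm g, ext_inner_right 𝕜 fun y ↦ ?_, ?_⟩
  · rw [← adjoint_inner_right, InnerProductSpace.toDual_symm_apply]
    simpa using hg y
  · rwa [LinearIsometryEquiv.norm_map]

/-- The constant `γ` of the criterion; `sSup` gives the junk value `0` when the set is empty or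
unbounded. -/
noncomputable def adjointRatioSup (A : H →L[𝕜] G) (u : G) : ℝ :=
  sSup {c : ℝ | ∃ y : G, adjoint A y ≠ 0 ∧ c = ‖⟪y, u⟫_𝕜‖ / ‖adjoint A y‖}

theorem adjointRatioSup_nonneg (A : H →L[𝕜] G) (u : G) : 0 ≤ adjointRatioSup A u :=
  Real.sSup_nonneg <| by rintro _ ⟨y, -, rfl⟩; positivity

theorem ContinuousLinearMap.norm_inner_div_norm_adjoint_apply_le (A : H →L[𝕜] G) {x : H}
    {u : G} (hx : A x = u) (y : G) : ‖⟪y, u⟫_𝕜‖ / ‖adjoint A y‖ ≤ ‖x‖ :=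
  div_le_of_le_mul₀ (norm_nonneg _) (norm_nonneg x)
    (A.norm_inner_le_norm_mul_norm_adjoint_apply hx y)

theorem adjointRatioSup_le_norm (A : H →L[𝕜] G) {x : H} {u : G} (hx : A x = u) :
    adjointRatioSup A u ≤ ‖x‖ :=
  Real.sSup_le (by rintro _ ⟨y, -, rfl⟩; exact A.norm_inner_div_norm_adjoint_apply_le hx y)
    (norm_nonneg x)

theorem norm_inner_le_adjointRatioSup_mul (A : H →L[𝕜] G) (x : H) (y : G) :
    ‖⟪y, A x⟫_𝕜‖ ≤ adjointRatioSup A (A x) * ‖adjoint A y‖ := by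
  by_cases hy : adjoint A y = 0
  · simp [← adjoint_inner_left, hy]
  have hbdd : BddAbove {c : ℝ | ∃ y : G, adjoint A y ≠ 0 ∧ c = ‖⟪y, A x⟫_𝕜‖ / ‖adjoint A y‖} :=
    ⟨‖x‖, by rintro _ ⟨y, -, rfl⟩; exact A.norm_inner_div_norm_adjoint_apply_le rfl y⟩
  rw [← div_le_iff₀ (norm_pos_iff.mpr hy)]
  exact le_csSup hbdd ⟨y, hy, rfl⟩

end Hilbert

/-- Shmuly'an's theorem with norm identity: `u ∈ ran A` iff
`γ = sup{|⟨y,u⟩|/‖A*y‖ : A*y ≠ 0}` is finite (i.e. `|⟨y,u⟩| ≤ γ‖A*y‖` for some `γ`),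
and in that case the minimal preimage norm `min{‖x‖ : Ax = u}` equals `γ`. -/
theorem shmulyan_range_criterion {H G : Type*} [NormedAddCommGroup H] [InnerProductSpace ℂ H]
    [CompleteSpace H] [NormedAddCommGroup G] [InnerProductSpace ℂ G] [CompleteSpace G]
    (A : H →L[ℂ] G) (u : G) :
    (u ∈ Set.range A ↔ ∃ γ : ℝ, ∀ y : G, ‖(inner ℂ y u : ℂ)‖ ≤ γ * ‖adjoint A y‖) ∧
      (u ∈ Set.range A →
        sInf {r : ℝ | ∃ x : H, A x = u ∧ r = ‖x‖}
          = sSup {c : ℝ | ∃ y : G, adjoint A y ≠ 0 ∧ c = ‖(inner ℂ y u : ℂ)‖ / ‖adjoint A y‖}) := by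
  refine ⟨⟨?_, ?_⟩, ?_⟩
  · rintro ⟨x, rfl⟩
    exact ⟨‖x‖, A.norm_inner_le_norm_mul_norm_adjoint_apply rfl⟩
  · rintro ⟨γ, hγ⟩
    obtain ⟨x, hx, -⟩ := A.exists_apply_eq_norm_le_of_norm_inner_le u (le_max_right γ 0)
      fun y ↦ (hγ y).trans <| by gcongr; exact le_max_left γ 0
    exact ⟨x, hx⟩
  · rintro ⟨x₀, rfl⟩
    obtain ⟨x, hx, hx_norm⟩ := A.exists_apply_eq_norm_le_of_norm_inner_le (A x₀)
      (adjointRatioSup_nonneg A (A x₀)) (norm_inner_le_adjointRatioSup_mul A x₀)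
    have hbdd : BddBelow {r : ℝ | ∃ x : H, A x = A x₀ ∧ r = ‖x‖} :=
      ⟨0, by rintro _ ⟨x, -, rfl⟩; exact norm_nonneg x⟩
    refine le_antisymm ((csInf_le hbdd ⟨x, hx, rfl⟩).trans hx_norm) (le_csInf ⟨_, x₀, rfl, rfl⟩ ?_)
    rintro _ ⟨x, hx, rfl⟩
    exact adjointRatioSup_le_norm A hx
end

section
/- Let T₁, T₂, T₃ ∈ B(H) satisfy 0 ≤ T₁T₁* + T₂T₂* − T₃T₃* ≤ I and let T be the positive square root of T₁T₁* + T₂T₂* − T₃T₃*. For ε > 0 let E_ε^⊥ = E((ε,∞)) be the spectral projection of T for the interval (ε,∞). Then there exists δ > 0 such that for all x ∈ E_ε^⊥ H: ‖T₁*x‖² + ‖T₂*x‖² − ‖T₃*x‖² ≥ δ(‖T₁*x‖² + ‖T₂*x‖² + ‖T₃*x‖²). -/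
/-!
The operator `T` is bounded below by `ε` on `E((ε,∞))H`. Indeed, for `g(t) = max 0 (ε² - t²)`
the vector `g(T)x` lies in `E([0,ε])H`, because `|tⁿ g(t)| ≤ εⁿ |g(t)|` on the spectrum, so it is
orthogonal to every `x ∈ E((ε,∞))H`; and `ε² - g(t) = min ε² t² ≤ t²` then yields
`ε²‖x‖² = ε²‖x‖² - ⟪g(T)x, x⟫ ≤ ‖Tx‖²`.
Since `‖Tx‖² = ‖T₁*x‖² + ‖T₂*x‖² - ‖T₃*x‖² ≥ 0`, the sum `‖T₁*x‖² + ‖T₂*x‖² + ‖T₃*x‖²` is at most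
`K‖x‖²` with `K = 2(‖T₁*‖² + ‖T₂*‖²) + 1`, and `δ = ε²/K` works.
-/

set_option synthInstance.maxHeartbeats 800000
set_option maxHeartbeats 1000000

open ContinuousLinearMap

/-- For a positive operator `T`, the spectral subspace of `[0, ε]` is
`{x | ‖Tⁿx‖ ≤ εⁿ‖x‖ for all n}`. -/
def spectralLE {H : Type*} [NormedAddCommGroup H] [InnerProductSpace ℂ H]
    (T : H →L[ℂ] H) (ε : ℝ) : Set H :=
  {x | ∀ n : ℕ, ‖(T ^ n) x‖ ≤ ε ^ n * ‖x‖}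

/-- For a positive operator `T`, the range `E((ε,∞))H` of the spectral projection of `T`
for the interval `(ε,∞)` is the orthogonal complement of the spectral subspace of `[0, ε]`. -/
def spectralGT {H : Type*} [NormedAddCommGroup H] [InnerProductSpace ℂ H]
    (T : H →L[ℂ] H) (ε : ℝ) : Set H :=
  {x | ∀ y ∈ spectralLE T ε, (inner ℂ y x : ℂ) = 0}

open RCLike

section InnerProductSpace

variable {𝕜 E : Type*} [RCLike 𝕜] [NormedAddCommGroup E] [InnerProductSpace 𝕜 E]

namespace ContinuousLinearMap

lemma re_inner_apply_le_of_le {A B : E →L[𝕜] E} (h : A ≤ B) (x : E) :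
    re (inner 𝕜 (A x) x) ≤ re (inner 𝕜 (B x) x) := by
  have := ((le_def A B).mp h).re_inner_nonneg_left x
  rwa [sub_apply, inner_sub_left, map_sub, sub_nonneg] at this

lemma re_inner_comp_adjoint_apply [CompleteSpace E] (S : E →L[𝕜] E) (x : E) :
    re (inner 𝕜 ((S ∘L adjoint S) x) x) = ‖adjoint S x‖ ^ 2 := by
  rw [apply_norm_sq_eq_inner_adjoint_left, adjoint_adjoint]

end ContinuousLinearMap

lemma IsSelfAdjoint.re_inner_mul_self_apply [CompleteSpace E] {A : E →L[𝕜] E}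
    (hA : IsSelfAdjoint A) (x : E) : re (inner 𝕜 ((A * A) x) x) = ‖A x‖ ^ 2 := by
  simpa only [hA.adjoint_eq, mul_def] using re_inner_comp_adjoint_apply A x

end InnerProductSpace

section ContinuousFunctionalCalculus

variable {H : Type*} [NormedAddCommGroup H] [InnerProductSpace ℂ H] [CompleteSpace H]

lemma norm_cfc_apply_sq (f : ℝ → ℝ) (T : H →L[ℂ] H) (x : H)
    (hf : ContinuousOn f (spectrum ℝ T) := by cfc_cont_tac) :
    ‖cfc f T x‖ ^ 2 = re (inner ℂ (cfc (fun t => f t ^ 2) T x) x) := by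
  simp only [sq, cfc_mul f f T, (cfc_predicate f T).re_inner_mul_self_apply]

lemma norm_cfc_apply_le_mul {f g : ℝ → ℝ} {T : H →L[ℂ] H} {c : ℝ} (hc : 0 ≤ c)
    (h : ∀ t ∈ spectrum ℝ T, |f t| ≤ c * |g t|) (x : H)
    (hf : ContinuousOn f (spectrum ℝ T) := by cfc_cont_tac)
    (hg : ContinuousOn g (spectrum ℝ T) := by cfc_cont_tac) :
    ‖cfc f T x‖ ≤ c * ‖cfc g T x‖ := by
  have hmono : cfc (fun t => f t ^ 2) T ≤ cfc (fun t => c ^ 2 * g t ^ 2) T := by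
    refine cfc_mono fun t ht => ?_
    rw [← mul_pow, sq_le_sq, abs_mul, abs_of_nonneg hc]
    exact h t ht
  have hsq : ‖cfc f T x‖ ^ 2 ≤ (c * ‖cfc g T x‖) ^ 2 :=
    calc ‖cfc f T x‖ ^ 2 = re (inner ℂ (cfc (fun t => f t ^ 2) T x) x) := norm_cfc_apply_sq f T x
      _ ≤ re (inner ℂ (cfc (fun t => c ^ 2 * g t ^ 2) T x) x) := re_inner_apply_le_of_le hmono x
      _ = (c * ‖cfc g T x‖) ^ 2 := by
        rw [cfc_const_mul _ _ T, mul_pow, norm_cfc_apply_sq g T x, smul_apply,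
          real_smul_eq_coe_smul (K := ℂ), inner_smul_left, conj_ofReal, re_ofReal_mul]
  exact (pow_le_pow_iff_left₀ (norm_nonneg _) (by positivity) two_ne_zero).mp hsq

lemma cfc_apply_mem_spectralLE {T : H →L[ℂ] H} (hT : IsSelfAdjoint T) {ε : ℝ} (hε : 0 ≤ ε)
    {g : ℝ → ℝ} (hg_supp : ∀ t ∈ spectrum ℝ T, ε < |t| → g t = 0) (x : H)
    (hg : ContinuousOn g (spectrum ℝ T) := by cfc_cont_tac) :
    cfc g T x ∈ spectralLE T ε := by
  intro n
  have hpow : (T ^ n) (cfc g T x) = cfc (fun t => t ^ n * g t) T x := by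
    rw [cfc_mul (fun t => t ^ n) g T, cfc_pow_id T n hT]
    rfl
  rw [hpow]
  refine norm_cfc_apply_le_mul (pow_nonneg hε n) (fun t ht => ?_) x
  rw [abs_mul, abs_pow]
  rcases le_or_gt |t| ε with hle | hlt
  · gcongr
  · simp [hg_supp t ht hlt]

lemma mul_norm_le_norm_apply_of_mem_spectralGT {T : H →L[ℂ] H} (hT : IsSelfAdjoint T)
    {ε : ℝ} (hε : 0 ≤ ε) {x : H} (hx : x ∈ spectralGT T ε) : ε * ‖x‖ ≤ ‖T x‖ := by
  set g : ℝ → ℝ := fun t => max 0 (ε ^ 2 - t ^ 2)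
  have horth : inner ℂ (cfc g T x) x = 0 := by
    refine hx _ (cfc_apply_mem_spectralLE hT hε (fun t _ ht => ?_) x)
    have : ε ^ 2 < t ^ 2 := by rw [← sq_abs t]; gcongr
    exact max_eq_left (by linarith)
  have hmono : cfc (fun t => ε ^ 2 - g t) T ≤ cfc (fun t => t ^ 2) T :=
    cfc_mono fun t _ => by linarith [le_max_right 0 (ε ^ 2 - t ^ 2)]
  have hsq : (ε * ‖x‖) ^ 2 ≤ ‖T x‖ ^ 2 := by
    have := re_inner_apply_le_of_le hmono x
    rwa [cfc_sub _ _ T, cfc_const _ T, cfc_pow_id T 2 hT, sq T, hT.re_inner_mul_self_apply,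
      sub_apply, inner_sub_left, horth, sub_zero, Algebra.algebraMap_eq_smul_one,
      smul_apply, one_apply_eq_self, real_smul_eq_coe_smul (K := ℂ),
      inner_smul_left, inner_self_eq_norm_sq_to_K, conj_ofReal, ← ofReal_pow, ← ofReal_mul,
      ofReal_re, ← mul_pow] at this
  exact (pow_le_pow_iff_left₀ (by positivity) (norm_nonneg _) two_ne_zero).mp hsq

end ContinuousFunctionalCalculus

theorem uniformly_positive_subspace_general {H : Type*} [NormedAddCommGroup H] [InnerProductSpace ℂ H]
    [CompleteSpace H] (T₁ T₂ T₃ : H →L[ℂ] H)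
    (hpos : (T₁ ∘L adjoint T₁ + T₂ ∘L adjoint T₂ - T₃ ∘L adjoint T₃).IsPositive)
    (T : H →L[ℂ] H)
    (hT : T = CFC.sqrt (T₁ ∘L adjoint T₁ + T₂ ∘L adjoint T₂ - T₃ ∘L adjoint T₃))
    (ε : ℝ) (hε : 0 < ε) :
    ∃ δ : ℝ, 0 < δ ∧ ∀ x ∈ spectralGT T ε,
      δ * (‖adjoint T₁ x‖ ^ 2 + ‖adjoint T₂ x‖ ^ 2 + ‖adjoint T₃ x‖ ^ 2)
        ≤ ‖adjoint T₁ x‖ ^ 2 + ‖adjoint T₂ x‖ ^ 2 - ‖adjoint T₃ x‖ ^ 2 := by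
  have hTnonneg : 0 ≤ T := hT ▸ CFC.sqrt_nonneg _
  have hnorm_sq : ∀ x, ‖T x‖ ^ 2 = ‖adjoint T₁ x‖ ^ 2 + ‖adjoint T₂ x‖ ^ 2 - ‖adjoint T₃ x‖ ^ 2 := by
    intro x
    rw [← hTnonneg.isSelfAdjoint.re_inner_mul_self_apply, hT,
      CFC.sqrt_mul_sqrt_self _ ((nonneg_iff_isPositive _).mpr hpos)]
    simp only [add_apply, sub_apply, inner_add_left, inner_sub_left, map_add, map_sub,
      re_inner_comp_adjoint_apply]
  set K := 2 * (‖adjoint T₁‖ ^ 2 + ‖adjoint T₂‖ ^ 2) + 1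
  refine ⟨ε ^ 2 / K, by positivity, fun x hx => ?_⟩
  have hlower : (ε * ‖x‖) ^ 2 ≤ ‖T x‖ ^ 2 := by
    gcongr
    exact mul_norm_le_norm_apply_of_mem_spectralGT hTnonneg.isSelfAdjoint hε.le hx
  have hupper : ∀ S : H →L[ℂ] H, ‖S x‖ ^ 2 ≤ ‖S‖ ^ 2 * ‖x‖ ^ 2 := fun S => by
    rw [← mul_pow]; gcongr; exact S.le_opNorm x
  have hsum : ‖adjoint T₁ x‖ ^ 2 + ‖adjoint T₂ x‖ ^ 2 + ‖adjoint T₃ x‖ ^ 2 ≤ K * ‖x‖ ^ 2 := by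
    have hT₃ : ‖adjoint T₃ x‖ ^ 2 ≤ ‖adjoint T₁ x‖ ^ 2 + ‖adjoint T₂ x‖ ^ 2 := by
      linarith [hnorm_sq x, sq_nonneg ‖T x‖]
    linarith [hupper (adjoint T₁), hupper (adjoint T₂), sq_nonneg ‖x‖]
  calc ε ^ 2 / K * (‖adjoint T₁ x‖ ^ 2 + ‖adjoint T₂ x‖ ^ 2 + ‖adjoint T₃ x‖ ^ 2)
      ≤ ε ^ 2 / K * (K * ‖x‖ ^ 2) := by gcongr
    _ = (ε * ‖x‖) ^ 2 := by field_simp [(by positivity : 0 < K).ne']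
    _ ≤ _ := hnorm_sq x ▸ hlower

/-- The subspace `{(T₁*x, T₂*x, T₃*x) : x ∈ E((ε,∞))H}` is uniformly positive: there is `δ > 0`
with `‖T₁*x‖² + ‖T₂*x‖² − ‖T₃*x‖² ≥ δ(‖T₁*x‖² + ‖T₂*x‖² + ‖T₃*x‖²)` on `E((ε,∞))H`. -/
theorem uniformly_positive_subspace {H : Type*} [NormedAddCommGroup H] [InnerProductSpace ℂ H]
    [CompleteSpace H] (T₁ T₂ T₃ : H →L[ℂ] H)
    (hpos : (T₁ ∘L adjoint T₁ + T₂ ∘L adjoint T₂ - T₃ ∘L adjoint T₃).IsPositive)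
    (hcontr : (1 - (T₁ ∘L adjoint T₁ + T₂ ∘L adjoint T₂ - T₃ ∘L adjoint T₃)).IsPositive)
    (T : H →L[ℂ] H)
    (hT : T = CFC.sqrt (T₁ ∘L adjoint T₁ + T₂ ∘L adjoint T₂ - T₃ ∘L adjoint T₃))
    (ε : ℝ) (hε : 0 < ε) :
    ∃ δ : ℝ, 0 < δ ∧ ∀ x ∈ spectralGT T ε,
      δ * (‖adjoint T₁ x‖ ^ 2 + ‖adjoint T₂ x‖ ^ 2 + ‖adjoint T₃ x‖ ^ 2)
        ≤ ‖adjoint T₁ x‖ ^ 2 + ‖adjoint T₂ x‖ ^ 2 - ‖adjoint T₃ x‖ ^ 2 :=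
  uniformly_positive_subspace_general T₁ T₂ T₃ hpos T hT ε hε
end

section
/- Let T₁, T₂, T₃ ∈ B(H) with 0 ≤ T₁T₁* + T₂T₂* − T₃T₃* ≤ I and T the positive square root. If u = Tx with x ∈ (ker T)^⊥, then for every ε > 0, setting x_ε = E((ε,∞))x, y_ε = (∫_{(ε,∞)} λ^{-1} dE_λ)x_ε, and z_j(ε) = T_j* y_ε (j = 1,2,3), one has: (i) T₁z₁(ε) + T₂z₂(ε) − T₃z₃(ε) = Tx_ε → u in H as ε → 0; (ii) 0 ≤ ‖z₁(ε)‖² + ‖z₂(ε)‖² − ‖z₃(ε)‖² = ‖x_ε‖² and ‖x_ε‖² increases to ‖u‖²_{M(T)} = ‖x‖² as ε ↓ 0. -/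
/-!
Write `K_ε` for the vectors `x` with `‖Tⁿx‖ = O(εⁿ)`, i.e. `E([0, ε])H`. For self-adjoint `T` the
sequence `n ↦ ‖Tⁿx‖` is log-convex, so such a bound already gives `‖Tⁿx‖ ≤ εⁿ‖x‖`: hence
`K_ε = spectralLE T ε` is a closed subspace, and `x_ε` is the projection of `x` onto `K_εᗮ`.
A continuous function of `T` vanishing on `(ε, ∞)` maps `H` into `K_ε`, so, being self-adjoint, it
kills `K_εᗮ`. Applied to `1 - t / max t ε` this shows that `y_ε = f(T) x_ε` with
`f(t) = 1 / max t ε` (which agrees with `λ⁻¹` on `(ε, ∞)`) solves `T y_ε = x_ε`.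
Convergence comes from `‖x - x_ε‖ ≤ ‖x - Tw‖ + ε‖w‖` for every `w`, together with
`x ∈ (ker T)ᗮ = closure (range T)`; the norm identity is
`‖T₁*y‖² + ‖T₂*y‖² - ‖T₃*y‖² = ⟪T²y, y⟫ = ‖Ty‖²`.
-/

set_option synthInstance.maxHeartbeats 800000
set_option maxHeartbeats 1000000

open ContinuousLinearMap Filter

open scoped InnerProductSpace Topology

theorem succ_le_mul_of_logConvex_of_le_mul_pow {a : ℕ → ℝ} {ε C : ℝ} (hε : 0 < ε)
    (ha : ∀ n, 0 ≤ a n) (hconv : ∀ n, a (n + 1) ^ 2 ≤ a n * a (n + 2))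
    (hC : ∀ n, a n ≤ C * ε ^ n) (n : ℕ) : a (n + 1) ≤ ε * a n := by
  by_contra! hlt
  have han : 0 < a n := by
    refine (ha n).lt_of_ne fun h0 => ?_
    have := hconv n
    rw [← h0, zero_mul] at this
    rw [← h0, mul_zero] at hlt
    nlinarith
  set r := a (n + 1) / a n
  have hr : ε < r := by rwa [lt_div_iff₀ han]
  -- the ratios `a (k + 1) / a k` increase from `k = n` on
  have hratio : ∀ k, 0 < a (n + k) ∧ r * a (n + k) ≤ a (n + k + 1) := by
    intro k
    induction k with
    | zero => exact ⟨han, (div_mul_cancel₀ _ han.ne').le⟩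
    | succ k ih =>
      obtain ⟨hpos, hle⟩ := ih
      have hpos' : 0 < a (n + k + 1) := (mul_pos (hε.trans hr) hpos).trans_le hle
      refine ⟨hpos', ?_⟩
      have := hconv (n + k)
      rw [← add_assoc]
      nlinarith
  have hgrowth : ∀ k, r ^ k * a n ≤ C * ε ^ n * ε ^ k := by
    intro k
    have hpow : r ^ k * a n ≤ a (n + k) := by
      induction k with
      | zero => simp
      | succ k ih =>
        calc r ^ (k + 1) * a n = r * (r ^ k * a n) := by ring
          _ ≤ r * a (n + k) := by gcongr; exact (hε.trans hr).le
          _ ≤ a (n + (k + 1)) := (hratio k).2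
    calc r ^ k * a n ≤ a (n + k) := hpow
      _ ≤ C * ε ^ (n + k) := hC (n + k)
      _ = C * ε ^ n * ε ^ k := by ring
  obtain ⟨k, hk⟩ := pow_unbounded_of_one_lt (C * ε ^ n / a n) ((one_lt_div hε).2 hr)
  refine hk.not_ge ?_
  rw [div_pow, div_le_div_iff₀ (pow_pos hε k) han]
  exact hgrowth k

theorem Submodule.norm_starProjection_le_of_le {𝕜 E : Type*} [RCLike 𝕜] [NormedAddCommGroup E]
    [InnerProductSpace 𝕜 E] {U V : Submodule 𝕜 E} [U.HasOrthogonalProjection]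
    [V.HasOrthogonalProjection] (h : U ≤ V) (x : E) :
    ‖U.starProjection x‖ ≤ ‖V.starProjection x‖ := by
  rw [← starProjection_comp_starProjection_of_le h, comp_apply]
  exact U.norm_starProjection_apply_le _

theorem ContinuousLinearMap.re_inner_comp_adjoint_add_sub_apply {𝕜 E F : Type*} [RCLike 𝕜]
    [NormedAddCommGroup E] [InnerProductSpace 𝕜 E] [CompleteSpace E] [NormedAddCommGroup F]
    [InnerProductSpace 𝕜 F] [CompleteSpace F] (S₁ S₂ S₃ : E →L[𝕜] F) (y : F) :
    RCLike.re ⟪(S₁ ∘L adjoint S₁ + S₂ ∘L adjoint S₂ - S₃ ∘L adjoint S₃) y, y⟫_𝕜 =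
      ‖adjoint S₁ y‖ ^ 2 + ‖adjoint S₂ y‖ ^ 2 - ‖adjoint S₃ y‖ ^ 2 := by
  simp only [apply_norm_sq_eq_inner_adjoint_left, adjoint_adjoint, add_apply, sub_apply,
    inner_add_left, inner_sub_left, map_add, map_sub]

section SpectralSubspace

variable {H : Type*} [NormedAddCommGroup H] [InnerProductSpace ℂ H] {T : H →L[ℂ] H}

/-- For self-adjoint `T` and `ε > 0` this is `spectralLE T ε`
(`IsSelfAdjoint.coe_spectralLESubmodule`); the `O(εⁿ)` form makes it visibly a subspace. -/
def spectralLESubmodule (T : H →L[ℂ] H) (ε : ℝ) : Submodule ℂ H where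
  carrier := {x | ∃ C, ∀ n, ‖(T ^ n) x‖ ≤ C * ε ^ n}
  add_mem' := by
    rintro a b ⟨C, hC⟩ ⟨D, hD⟩
    refine ⟨C + D, fun n => ?_⟩
    calc ‖(T ^ n) (a + b)‖ ≤ ‖(T ^ n) a‖ + ‖(T ^ n) b‖ := by
          rw [map_add]; exact norm_add_le _ _
      _ ≤ (C + D) * ε ^ n := by linarith [hC n, hD n]
  zero_mem' := ⟨0, fun n => by simp⟩
  smul_mem' := by
    rintro c x ⟨C, hC⟩
    refine ⟨‖c‖ * C, fun n => ?_⟩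
    rw [map_smul, norm_smul, mul_assoc]
    exact mul_le_mul_of_nonneg_left (hC n) (norm_nonneg c)

theorem spectralLE_subset_spectralLESubmodule (T : H →L[ℂ] H) (ε : ℝ) :
    spectralLE T ε ⊆ spectralLESubmodule T ε :=
  fun x hx => ⟨‖x‖, fun n => (hx n).trans_eq (mul_comm _ _)⟩

theorem orthogonal_spectralLESubmodule_subset_spectralGT (T : H →L[ℂ] H) (ε : ℝ) :
    ((spectralLESubmodule T ε)ᗮ : Set H) ⊆ spectralGT T ε :=
  fun _ hz _ hy => Submodule.inner_right_of_mem_orthogonal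
    (spectralLE_subset_spectralLESubmodule T ε hy) hz

theorem isClosed_spectralLE (T : H →L[ℂ] H) (ε : ℝ) : IsClosed (spectralLE T ε) := by
  simp only [spectralLE, Set.ofPred_forall]
  exact isClosed_iInter fun n => isClosed_le (by fun_prop) (by fun_prop)

theorem spectralLESubmodule_mono {ε₁ ε₂ : ℝ} (hε₁ : 0 ≤ ε₁) (h : ε₁ ≤ ε₂) :
    spectralLESubmodule T ε₁ ≤ spectralLESubmodule T ε₂ := by
  rintro x ⟨C, hC⟩
  have hC0 : 0 ≤ C := by simpa using (norm_nonneg x).trans (hC 0)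
  exact ⟨C, fun n => (hC n).trans (by gcongr)⟩

theorem Commute.apply_mem_spectralLESubmodule {S : H →L[ℂ] H} (hST : Commute S T) {ε : ℝ}
    {x : H} (hx : x ∈ spectralLESubmodule T ε) : S x ∈ spectralLESubmodule T ε := by
  obtain ⟨C, hC⟩ := hx
  refine ⟨‖S‖ * C, fun n => ?_⟩
  have hcomm : (T ^ n) (S x) = S ((T ^ n) x) :=
    congrArg (fun A : H →L[ℂ] H => A x) (hST.pow_right n).eq.symm
  rw [hcomm, mul_assoc]
  exact (S.le_opNorm _).trans (mul_le_mul_of_nonneg_left (hC n) (norm_nonneg S))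

variable [CompleteSpace H]

theorem IsSelfAdjoint.norm_pow_succ_apply_sq_le (hT : IsSelfAdjoint T) (x : H) (n : ℕ) :
    ‖(T ^ (n + 1)) x‖ ^ 2 ≤ ‖(T ^ n) x‖ * ‖(T ^ (n + 2)) x‖ := by
  have h : ⟪(T ^ (n + 1)) x, (T ^ (n + 1)) x⟫_ℂ = ⟪(T ^ n) x, (T ^ (n + 2)) x⟫_ℂ := by
    simp only [pow_succ']
    exact hT.isSymmetric _ _
  calc ‖(T ^ (n + 1)) x‖ ^ 2 = RCLike.re ⟪(T ^ n) x, (T ^ (n + 2)) x⟫_ℂ := by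
        rw [← h, inner_self_eq_norm_sq]
    _ ≤ ‖(T ^ n) x‖ * ‖(T ^ (n + 2)) x‖ := re_inner_le_norm _ _

theorem IsSelfAdjoint.mem_spectralLE_of_norm_pow_apply_le (hT : IsSelfAdjoint T) {ε C : ℝ}
    (hε : 0 < ε) {x : H} (hC : ∀ n, ‖(T ^ n) x‖ ≤ C * ε ^ n) : x ∈ spectralLE T ε := by
  intro n
  induction n with
  | zero => simp
  | succ n ih =>
    calc ‖(T ^ (n + 1)) x‖ ≤ ε * ‖(T ^ n) x‖ :=
          succ_le_mul_of_logConvex_of_le_mul_pow hε (fun _ => norm_nonneg _)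
            (hT.norm_pow_succ_apply_sq_le x) hC n
      _ ≤ ε * (ε ^ n * ‖x‖) := by gcongr
      _ = ε ^ (n + 1) * ‖x‖ := by ring

theorem IsSelfAdjoint.coe_spectralLESubmodule (hT : IsSelfAdjoint T) {ε : ℝ} (hε : 0 < ε) :
    (spectralLESubmodule T ε : Set H) = spectralLE T ε :=
  Set.Subset.antisymm (fun _ ⟨_, hC⟩ => hT.mem_spectralLE_of_norm_pow_apply_le hε hC)
    (spectralLE_subset_spectralLESubmodule T ε)

theorem IsSelfAdjoint.orthogonal_orthogonal_spectralLESubmodule (hT : IsSelfAdjoint T) {ε : ℝ}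
    (hε : 0 < ε) : (spectralLESubmodule T ε)ᗮᗮ = spectralLESubmodule T ε := by
  rw [Submodule.orthogonal_orthogonal_eq_closure]
  refine IsClosed.submodule_topologicalClosure_eq ?_
  rw [hT.coe_spectralLESubmodule hε]
  exact isClosed_spectralLE T ε

theorem IsSelfAdjoint.sub_starProjection_orthogonal_mem_spectralLE (hT : IsSelfAdjoint T)
    {ε : ℝ} (hε : 0 < ε) (x : H) :
    x - (spectralLESubmodule T ε)ᗮ.starProjection x ∈ spectralLE T ε := by
  have h := Submodule.sub_starProjection_mem_orthogonal (K := (spectralLESubmodule T ε)ᗮ) x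
  rw [hT.orthogonal_orthogonal_spectralLESubmodule hε] at h
  rwa [← hT.coe_spectralLESubmodule hε]

theorem IsSelfAdjoint.apply_mem_orthogonal_spectralLESubmodule {S : H →L[ℂ] H}
    (hS : IsSelfAdjoint S) (hST : Commute S T) {ε : ℝ} {z : H}
    (hz : z ∈ (spectralLESubmodule T ε)ᗮ) : S z ∈ (spectralLESubmodule T ε)ᗮ := by
  rw [Submodule.mem_orthogonal] at hz ⊢
  exact fun k hk => (hS.isSymmetric k z).symm.trans (hz _ (hST.apply_mem_spectralLESubmodule hk))

end SpectralSubspace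

section FunctionalCalculus

variable {H : Type*} [NormedAddCommGroup H] [InnerProductSpace ℂ H] [CompleteSpace H]
  {T : H →L[ℂ] H} {ε : ℝ}

theorem cfc_apply_mem_spectralLESubmodule (hT : IsSelfAdjoint T) (hε : 0 ≤ ε) {f : ℝ → ℝ}
    (hfc : ContinuousOn f (spectrum ℝ T)) (hf : ∀ t ∈ spectrum ℝ T, f t ≠ 0 → |t| ≤ ε)
    (w : H) : cfc f T w ∈ spectralLESubmodule T ε := by
  refine ⟨‖cfc f T‖ * ‖w‖, fun n => ?_⟩
  have hpow : (T ^ n) (cfc f T w) = cfc (fun t => t ^ n * f t) T w := by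
    rw [cfc_mul (· ^ n) f T, cfc_pow_id T n hT]; rfl
  have hnorm : ‖cfc (fun t => t ^ n * f t) T‖ ≤ ε ^ n * ‖cfc f T‖ := by
    refine norm_cfc_le (by positivity) fun t ht => ?_
    rw [norm_mul, norm_pow, Real.norm_eq_abs]
    by_cases h0 : f t = 0
    · simp only [h0, norm_zero, mul_zero]
      positivity
    · exact mul_le_mul (pow_le_pow_left₀ (abs_nonneg t) (hf t ht h0) n)
        (norm_apply_le_norm_cfc f T ht) (norm_nonneg _) (by positivity)
  rw [hpow]
  calc ‖cfc (fun t => t ^ n * f t) T w‖ ≤ ‖cfc (fun t => t ^ n * f t) T‖ * ‖w‖ := le_opNorm _ _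
    _ ≤ ε ^ n * ‖cfc f T‖ * ‖w‖ := by gcongr
    _ = ‖cfc f T‖ * ‖w‖ * ε ^ n := by ring

theorem cfc_apply_eq_zero_of_mem_orthogonal (hT : IsSelfAdjoint T) (hε : 0 ≤ ε) {f : ℝ → ℝ}
    (hfc : ContinuousOn f (spectrum ℝ T)) (hf : ∀ t ∈ spectrum ℝ T, f t ≠ 0 → |t| ≤ ε) {z : H}
    (hz : z ∈ (spectralLESubmodule T ε)ᗮ) : cfc f T z = 0 := by
  rw [← inner_self_eq_zero (𝕜 := ℂ)]
  exact ((IsSelfAdjoint.cfc (f := f) (a := T)).isSymmetric z _).trans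
    (Submodule.inner_left_of_mem_orthogonal (cfc_apply_mem_spectralLESubmodule hT hε hfc hf _) hz)

theorem cfc_apply_mem_orthogonal_spectralLESubmodule (f : ℝ → ℝ) {z : H}
    (hz : z ∈ (spectralLESubmodule T ε)ᗮ) : cfc f T z ∈ (spectralLESubmodule T ε)ᗮ :=
  IsSelfAdjoint.cfc.apply_mem_orthogonal_spectralLESubmodule ((Commute.refl T).cfc_real f) hz

theorem apply_cfc_inv_max_apply (hT : 0 ≤ T) (hε : 0 < ε) {z : H}
    (hz : z ∈ (spectralLESubmodule T ε)ᗮ) : T (cfc (fun t => (max t ε)⁻¹) T z) = z := by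
  have hr : Continuous fun t : ℝ => (max t ε)⁻¹ :=
    (continuous_id.max continuous_const).inv₀ fun t => (hε.trans_le (le_max_right t ε)).ne'
  have hker : cfc (fun t => 1 - t * (max t ε)⁻¹) T z = 0 := by
    refine cfc_apply_eq_zero_of_mem_orthogonal (.of_nonneg hT) hε.le (by fun_prop)
      (fun t ht hne => ?_) hz
    rw [abs_of_nonneg (spectrum_nonneg_of_nonneg hT ht)]
    by_contra! hlt
    rw [max_eq_left hlt.le, mul_inv_cancel₀ (hε.trans hlt).ne', sub_self] at hne
    exact hne rfl
  have hsplit : T * cfc (fun t => (max t ε)⁻¹) T = 1 - cfc (fun t => 1 - t * (max t ε)⁻¹) T := by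
    rw [cfc_sub (fun _ => 1) _ T, cfc_const_one ℝ T, sub_sub_cancel,
      cfc_mul (fun t => t) _ T continuousOn_id hr.continuousOn, cfc_id' ℝ T]
  calc T (cfc (fun t => (max t ε)⁻¹) T z) = (T * cfc (fun t => (max t ε)⁻¹) T) z := rfl
    _ = z := by rw [hsplit, sub_apply, hker, sub_zero]; rfl

theorem IsSelfAdjoint.norm_sub_starProjection_orthogonal_le (hT : IsSelfAdjoint T)
    (hε : 0 < ε) (x w : H) :
    ‖x - (spectralLESubmodule T ε)ᗮ.starProjection x‖ ≤ ‖x - T w‖ + ε * ‖w‖ := by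
  set v := x - (spectralLESubmodule T ε)ᗮ.starProjection x
  have hv : v ∈ spectralLE T ε := hT.sub_starProjection_orthogonal_mem_spectralLE hε x
  have hTv : ‖T v‖ ≤ ε * ‖v‖ := by simpa using hv 1
  have horth : ⟪v, (spectralLESubmodule T ε)ᗮ.starProjection x⟫_ℂ = 0 :=
    Submodule.inner_right_of_mem_orthogonal (spectralLE_subset_spectralLESubmodule T ε hv)
      (Submodule.starProjection_apply_mem _ x)
  have hsplit : ⟪v, v⟫_ℂ = ⟪v, x - T w⟫_ℂ + ⟪T v, w⟫_ℂ := by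
    have hsymm : ⟪T v, w⟫_ℂ = ⟪v, T w⟫_ℂ := hT.isSymmetric v w
    rw [hsymm, ← inner_add_right, sub_add_cancel, ← sub_eq_zero, ← inner_sub_right]
    simp only [v, sub_sub_cancel_left, inner_neg_right, horth, neg_zero]
  have key : ‖v‖ * ‖v‖ ≤ ‖v‖ * (‖x - T w‖ + ε * ‖w‖) :=
    calc ‖v‖ * ‖v‖ = RCLike.re ⟪v, v⟫_ℂ := by rw [inner_self_eq_norm_sq, sq]
      _ = RCLike.re ⟪v, x - T w⟫_ℂ + RCLike.re ⟪T v, w⟫_ℂ := by rw [hsplit, map_add]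
      _ ≤ ‖v‖ * ‖x - T w‖ + ‖T v‖ * ‖w‖ := add_le_add (re_inner_le_norm _ _) (re_inner_le_norm _ _)
      _ ≤ ‖v‖ * ‖x - T w‖ + ε * ‖v‖ * ‖w‖ := by gcongr
      _ = ‖v‖ * (‖x - T w‖ + ε * ‖w‖) := by ring
  rcases (norm_nonneg v).eq_or_lt with h | h
  · rw [← h]; positivity
  · exact le_of_mul_le_mul_left key h

theorem IsSelfAdjoint.tendsto_starProjection_orthogonal_spectralLESubmodule
    (hT : IsSelfAdjoint T) {x : H} (hx : x ∈ (LinearMap.ker (T : H →ₗ[ℂ] H))ᗮ) :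
    Tendsto (fun ε => (spectralLESubmodule T ε)ᗮ.starProjection x) (𝓝[>] 0) (𝓝 x) := by
  have hcl : x ∈ closure (Set.range T) := by
    have h := T.orthogonal_ker ▸ hx
    rwa [hT.adjoint_eq] at h
  rw [Metric.tendsto_nhds]
  intro η hη
  obtain ⟨_, ⟨w, rfl⟩, hw⟩ := Metric.mem_closure_iff.1 hcl (η / 2) (half_pos hη)
  rw [dist_eq_norm] at hw
  filter_upwards [Ioo_mem_nhdsGT (show 0 < η / 2 / (‖w‖ + 1) by positivity)] with ε ⟨hε, hεη⟩
  have hεw : ε * ‖w‖ < η / 2 := by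
    rw [lt_div_iff₀ (by positivity)] at hεη
    nlinarith [norm_nonneg w]
  rw [dist_comm, dist_eq_norm]
  linarith [hT.norm_sub_starProjection_orthogonal_le hε x w]

end FunctionalCalculus

theorem csInf_norm_preimage_eq_norm {𝕜 E F : Type*} [RCLike 𝕜] [NormedAddCommGroup E]
    [InnerProductSpace 𝕜 E] [AddCommGroup F] [Module 𝕜 F] (T : E →ₗ[𝕜] F) {x : E}
    (hx : x ∈ (LinearMap.ker T)ᗮ) : sInf {r : ℝ | ∃ y, T y = T x ∧ r = ‖y‖} = ‖x‖ := by
  refine IsLeast.csInf_eq ⟨⟨x, rfl, rfl⟩, ?_⟩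
  rintro r ⟨y, hy, rfl⟩
  have hker : y - x ∈ LinearMap.ker T := by rw [LinearMap.mem_ker, map_sub, hy, sub_self]
  have hpyth := norm_add_sq_eq_norm_sq_add_norm_sq_of_inner_eq_zero x (y - x)
    (Submodule.inner_left_of_mem_orthogonal hker hx)
  rw [add_sub_cancel] at hpyth
  nlinarith [norm_nonneg x, norm_nonneg y, mul_self_nonneg ‖y - x‖]

theorem indefinite_range_inclusion_general {H : Type*} [NormedAddCommGroup H] [InnerProductSpace ℂ H]
    [CompleteSpace H] (T₁ T₂ T₃ : H →L[ℂ] H)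
    (hpos : (T₁ ∘L adjoint T₁ + T₂ ∘L adjoint T₂ - T₃ ∘L adjoint T₃).IsPositive)
    (T : H →L[ℂ] H)
    (hT : T = CFC.sqrt (T₁ ∘L adjoint T₁ + T₂ ∘L adjoint T₂ - T₃ ∘L adjoint T₃))
    (x : H) (hx : x ∈ (LinearMap.ker (T : H →ₗ[ℂ] H))ᗮ) (u : H) (hu : u = T x) :
    ∃ xe ye : ℝ → H,
      (∀ ε : ℝ, 0 < ε →
        xe ε ∈ spectralGT T ε ∧ x - xe ε ∈ spectralLE T ε ∧
        ye ε ∈ spectralGT T ε ∧ T (ye ε) = xe ε) ∧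
      (∀ ε : ℝ, 0 < ε →
        T₁ (adjoint T₁ (ye ε)) + T₂ (adjoint T₂ (ye ε)) - T₃ (adjoint T₃ (ye ε)) = T (xe ε)) ∧
      Tendsto (fun ε => T (xe ε)) (nhdsWithin 0 (Set.Ioi 0)) (nhds u) ∧
      (∀ ε : ℝ, 0 < ε →
        0 ≤ ‖adjoint T₁ (ye ε)‖ ^ 2 + ‖adjoint T₂ (ye ε)‖ ^ 2 - ‖adjoint T₃ (ye ε)‖ ^ 2 ∧
        ‖adjoint T₁ (ye ε)‖ ^ 2 + ‖adjoint T₂ (ye ε)‖ ^ 2 - ‖adjoint T₃ (ye ε)‖ ^ 2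
          = ‖xe ε‖ ^ 2) ∧
      (∀ ε₁ ε₂ : ℝ, 0 < ε₁ → ε₁ ≤ ε₂ → ‖xe ε₂‖ ≤ ‖xe ε₁‖) ∧
      Tendsto (fun ε => ‖xe ε‖ ^ 2) (nhdsWithin 0 (Set.Ioi 0)) (nhds (‖x‖ ^ 2)) ∧
      sInf {r : ℝ | ∃ y : H, T y = u ∧ r = ‖y‖} = ‖x‖ := by
  subst hu
  have hT0 : 0 ≤ T := hT ▸ CFC.sqrt_nonneg _
  have hTsa : IsSelfAdjoint T := .of_nonneg hT0
  have hTT : T * T = T₁ ∘L adjoint T₁ + T₂ ∘L adjoint T₂ - T₃ ∘L adjoint T₃ :=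
    hT ▸ CFC.sqrt_mul_sqrt_self _ ((nonneg_iff_isPositive _).2 hpos)
  let xe ε := (spectralLESubmodule T ε)ᗮ.starProjection x
  let ye ε := cfc (fun t => (max t ε)⁻¹) T (xe ε)
  have hxe ε : xe ε ∈ (spectralLESubmodule T ε)ᗮ := Submodule.starProjection_apply_mem _ x
  have hTye ε (hε : 0 < ε) : T (ye ε) = xe ε := apply_cfc_inv_max_apply hT0 hε (hxe ε)
  have hlim : Tendsto xe (𝓝[>] 0) (𝓝 x) :=
    hTsa.tendsto_starProjection_orthogonal_spectralLESubmodule hx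
  have hnorm ε (hε : 0 < ε) : ‖adjoint T₁ (ye ε)‖ ^ 2 + ‖adjoint T₂ (ye ε)‖ ^ 2
      - ‖adjoint T₃ (ye ε)‖ ^ 2 = ‖xe ε‖ ^ 2 := by
    rw [← re_inner_comp_adjoint_add_sub_apply, ← hTT, ← hTye ε hε,
      apply_norm_sq_eq_inner_adjoint_left, hTsa.adjoint_eq]
    rfl
  refine ⟨xe, ye, fun ε hε => ⟨?_, ?_, ?_, hTye ε hε⟩, fun ε hε => ?_,
    (T.continuous.tendsto x).comp hlim, fun ε hε => ⟨by rw [hnorm ε hε]; positivity,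
    hnorm ε hε⟩, fun ε₁ ε₂ hε₁ hε₁₂ => ?_, by simpa using (hlim.norm.pow 2),
    csInf_norm_preimage_eq_norm (T : H →ₗ[ℂ] H) hx⟩
  · exact orthogonal_spectralLESubmodule_subset_spectralGT T ε (hxe ε)
  · exact hTsa.sub_starProjection_orthogonal_mem_spectralLE hε x
  · exact orthogonal_spectralLESubmodule_subset_spectralGT T ε
      (cfc_apply_mem_orthogonal_spectralLESubmodule _ (hxe ε))
  · rw [← hTye ε hε]
    exact congrArg (fun A : H →L[ℂ] H => A (ye ε)) hTT.symm
  · exact Submodule.norm_starProjection_le_of_le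
      (Submodule.orthogonal_le (spectralLESubmodule_mono hε₁.le hε₁₂)) x

/-- The main construction: if `u = Tx` with `x ∈ (ker T)ᗮ`, then with
`x_ε = E((ε,∞))x`, `y_ε = (∫_{(ε,∞)} λ⁻¹ dE_λ)x_ε` (the unique vector of `E((ε,∞))H` with
`T y_ε = x_ε`) and `z_j(ε) = T_j^* y_ε`, one has
`T₁z₁(ε) + T₂z₂(ε) − T₃z₃(ε) = Tx_ε → u` as `ε → 0`, and
`0 ≤ ‖z₁(ε)‖² + ‖z₂(ε)‖² − ‖z₃(ε)‖² = ‖x_ε‖²` increases to `‖u‖²_{M(T)} = ‖x‖²` as `ε ↓ 0`. -/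
theorem indefinite_range_inclusion {H : Type*} [NormedAddCommGroup H] [InnerProductSpace ℂ H]
    [CompleteSpace H] (T₁ T₂ T₃ : H →L[ℂ] H)
    (hpos : (T₁ ∘L adjoint T₁ + T₂ ∘L adjoint T₂ - T₃ ∘L adjoint T₃).IsPositive)
    (hcontr : (1 - (T₁ ∘L adjoint T₁ + T₂ ∘L adjoint T₂ - T₃ ∘L adjoint T₃)).IsPositive)
    (T : H →L[ℂ] H)
    (hT : T = CFC.sqrt (T₁ ∘L adjoint T₁ + T₂ ∘L adjoint T₂ - T₃ ∘L adjoint T₃))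
    (x : H) (hx : x ∈ (LinearMap.ker (T : H →ₗ[ℂ] H))ᗮ) (u : H) (hu : u = T x) :
    ∃ xe ye : ℝ → H,
      (∀ ε : ℝ, 0 < ε →
        xe ε ∈ spectralGT T ε ∧ x - xe ε ∈ spectralLE T ε ∧
        ye ε ∈ spectralGT T ε ∧ T (ye ε) = xe ε) ∧
      (∀ ε : ℝ, 0 < ε →
        T₁ (adjoint T₁ (ye ε)) + T₂ (adjoint T₂ (ye ε)) - T₃ (adjoint T₃ (ye ε)) = T (xe ε)) ∧
      Tendsto (fun ε => T (xe ε)) (nhdsWithin 0 (Set.Ioi 0)) (nhds u) ∧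
      (∀ ε : ℝ, 0 < ε →
        0 ≤ ‖adjoint T₁ (ye ε)‖ ^ 2 + ‖adjoint T₂ (ye ε)‖ ^ 2 - ‖adjoint T₃ (ye ε)‖ ^ 2 ∧
        ‖adjoint T₁ (ye ε)‖ ^ 2 + ‖adjoint T₂ (ye ε)‖ ^ 2 - ‖adjoint T₃ (ye ε)‖ ^ 2
          = ‖xe ε‖ ^ 2) ∧
      (∀ ε₁ ε₂ : ℝ, 0 < ε₁ → ε₁ ≤ ε₂ → ‖xe ε₂‖ ≤ ‖xe ε₁‖) ∧
      Tendsto (fun ε => ‖xe ε‖ ^ 2) (nhdsWithin 0 (Set.Ioi 0)) (nhds (‖x‖ ^ 2)) ∧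
      sInf {r : ℝ | ∃ y : H, T y = u ∧ r = ‖y‖} = ‖x‖ :=
  indefinite_range_inclusion_general T₁ T₂ T₃ hpos T hT x hx u hu
end

section
/- Let H be a finite-dimensional Hilbert space and T₁, T₂, T₃ ∈ B(H) with 0 ≤ T₁T₁* + T₂T₂* − T₃T₃* ≤ I, and T the positive square root. Then for every u ∈ ran T there exist z₁, z₂, z₃ ∈ H such that T₁z₁ + T₂z₂ − T₃z₃ = u and ‖z₁‖² + ‖z₂‖² − ‖z₃‖² = ‖u‖²_{M(T)}. -/
open ContinuousLinearMap

/-!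
Write `A = T₁T₁* + T₂T₂* − T₃T₃* = T T*`. In finite dimensions `ran (T T*) = ran T`, so
`u = A w` for some `w`, and `zᵢ = Tᵢ* w` gives `T₁z₁ + T₂z₂ − T₃z₃ = A w = u` with
`‖z₁‖² + ‖z₂‖² − ‖z₃‖² = re ⟪A w, w⟫ = ‖T* w‖²`. Finally `T* w` is the preimage of `u` of least
norm: it lies in `ran T* = (ker T)ᗮ`, so any other preimage differs from it by an orthogonal vector.
-/

namespace ContinuousLinearMap

variable {𝕜 E F : Type*} [RCLike 𝕜] [NormedAddCommGroup E] [InnerProductSpace 𝕜 E]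
  [NormedAddCommGroup F] [InnerProductSpace 𝕜 F] [CompleteSpace E] [CompleteSpace F]

theorem norm_le_of_apply_eq_of_mem_range_adjoint (S : E →L[𝕜] F) {y y' : E}
    (hy : y ∈ (adjoint S).range) (h : S y' = S y) : ‖y‖ ≤ ‖y'‖ := by
  obtain ⟨x, hx⟩ := hy
  rw [coe_coe] at hx
  have horth : inner 𝕜 y (y' - y) = 0 := by
    rw [← hx, adjoint_inner_left, map_sub, hx, h, sub_self, inner_zero_right]
  have hpyth := norm_add_sq_eq_norm_sq_add_norm_sq_of_inner_eq_zero y (y' - y) horth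
  rw [add_sub_cancel] at hpyth
  exact (mul_self_le_mul_self_iff (norm_nonneg _) (norm_nonneg _)).2
    (hpyth ▸ le_add_of_nonneg_right (mul_self_nonneg _))

theorem sInf_norm_preimage_eq_of_mem_range_adjoint (S : E →L[𝕜] F) {y : E}
    (hy : y ∈ (adjoint S).range) : sInf {r : ℝ | ∃ y' : E, S y' = S y ∧ r = ‖y'‖} = ‖y‖ :=
  IsLeast.csInf_eq ⟨⟨y, rfl, rfl⟩, by
    rintro _ ⟨y', h, rfl⟩
    exact S.norm_le_of_apply_eq_of_mem_range_adjoint hy h⟩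

theorem norm_adjoint_apply_sq (S : E →L[𝕜] F) (w : F) :
    ‖adjoint S w‖ ^ 2 = RCLike.re (inner 𝕜 (S (adjoint S w)) w) := by
  simpa using (adjoint S).apply_norm_sq_eq_inner_adjoint_left w

theorem norm_adjoint_sq_add_sub (S₁ S₂ S₃ : E →L[𝕜] F) (w : F) :
    ‖adjoint S₁ w‖ ^ 2 + ‖adjoint S₂ w‖ ^ 2 - ‖adjoint S₃ w‖ ^ 2 =
      RCLike.re (inner 𝕜 ((S₁ ∘L adjoint S₁ + S₂ ∘L adjoint S₂ - S₃ ∘L adjoint S₃) w) w) := by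
  simp only [norm_adjoint_apply_sq, add_apply, sub_apply, comp_apply, inner_add_left,
    inner_sub_left, map_add, map_sub]

theorem range_comp_adjoint [FiniteDimensional 𝕜 E] [FiniteDimensional 𝕜 F] (S : E →L[𝕜] F) :
    (S ∘L adjoint S).range = S.range :=
  (S : E →ₗ[𝕜] F).range_self_comp_adjoint

end ContinuousLinearMap

theorem finite_dim_indefinite_range_general {H : Type*} [NormedAddCommGroup H] [InnerProductSpace ℂ H]
    [FiniteDimensional ℂ H] (T₁ T₂ T₃ : H →L[ℂ] H)
    (hpos : (T₁ ∘L adjoint T₁ + T₂ ∘L adjoint T₂ - T₃ ∘L adjoint T₃).IsPositive)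
    (T : H →L[ℂ] H)
    (hT : T = CFC.sqrt (T₁ ∘L adjoint T₁ + T₂ ∘L adjoint T₂ - T₃ ∘L adjoint T₃))
    (u : H) (hu : u ∈ Set.range T) :
    ∃ z₁ z₂ z₃ : H, T₁ z₁ + T₂ z₂ - T₃ z₃ = u ∧
      ‖z₁‖ ^ 2 + ‖z₂‖ ^ 2 - ‖z₃‖ ^ 2 = (sInf {r : ℝ | ∃ y : H, T y = u ∧ r = ‖y‖}) ^ 2 := by
  set A := T₁ ∘L adjoint T₁ + T₂ ∘L adjoint T₂ - T₃ ∘L adjoint T₃ with hA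
  have hTsa : IsSelfAdjoint T := hT ▸ (CFC.sqrt_nonneg A).isSelfAdjoint
  have hTT : T ∘L adjoint T = A := by
    rw [hTsa.adjoint_eq, hT]
    exact CFC.sqrt_mul_sqrt_self A ((nonneg_iff_isPositive A).2 hpos)
  obtain ⟨w, hw⟩ : u ∈ A.range := by
    rw [← hTT, range_comp_adjoint]
    exact hu
  rw [coe_coe] at hw
  subst hw
  refine ⟨adjoint T₁ w, adjoint T₂ w, adjoint T₃ w, by simp [A], ?_⟩
  rw [norm_adjoint_sq_add_sub, ← hA, ← hTT, comp_apply,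
    sInf_norm_preimage_eq_of_mem_range_adjoint T (y := adjoint T w) ⟨w, rfl⟩,
    norm_adjoint_apply_sq]

/-- In finite dimensions, every `u ∈ ran T` is of the form `T₁z₁ + T₂z₂ − T₃z₃` with
`‖z₁‖² + ‖z₂‖² − ‖z₃‖² = ‖u‖²_{M(T)}`. -/
theorem finite_dim_indefinite_range {H : Type*} [NormedAddCommGroup H] [InnerProductSpace ℂ H]
    [FiniteDimensional ℂ H] (T₁ T₂ T₃ : H →L[ℂ] H)
    (hpos : (T₁ ∘L adjoint T₁ + T₂ ∘L adjoint T₂ - T₃ ∘L adjoint T₃).IsPositive)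
    (hcontr : (1 - (T₁ ∘L adjoint T₁ + T₂ ∘L adjoint T₂ - T₃ ∘L adjoint T₃)).IsPositive)
    (T : H →L[ℂ] H)
    (hT : T = CFC.sqrt (T₁ ∘L adjoint T₁ + T₂ ∘L adjoint T₂ - T₃ ∘L adjoint T₃))
    (u : H) (hu : u ∈ Set.range T) :
    ∃ z₁ z₂ z₃ : H, T₁ z₁ + T₂ z₂ - T₃ z₃ = u ∧
      ‖z₁‖ ^ 2 + ‖z₂‖ ^ 2 - ‖z₃‖ ^ 2 = (sInf {r : ℝ | ∃ y : H, T y = u ∧ r = ‖y‖}) ^ 2 :=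
  finite_dim_indefinite_range_general T₁ T₂ T₃ hpos T hT u hu
end

section
/- Let H be a finite-dimensional Hilbert space and T₁, T₂, T₃ ∈ B(H) with 0 ≤ T₁T₁* + T₂T₂* − T₃T₃* ≤ I, T the positive square root. Then ran T = { T₁z₁ + T₂z₂ − T₃z₃ : z₁,z₂,z₃ ∈ H, ‖z₁‖² + ‖z₂‖² − ‖z₃‖² ≥ 0 } ∩ ran T, and in particular every u ∈ ran T is of the form T₁z₁ + T₂z₂ − T₃z₃ with ‖z₁‖² + ‖z₂‖² ≥ ‖z₃‖². -/
open ContinuousLinearMap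

/-!
Put `S = T₁T₁* + T₂T₂* − T₃T₃*`. Since `T` is self-adjoint with `T² = S`, and in finite dimensions
`ran (AA*) = ran A`, the ranges of `T` and `S` agree. So every `u ∈ ran T` is `u = S y` for some
`y`, and `z_i = T_i* y` works: `u = T₁z₁ + T₂z₂ − T₃z₃` and
`‖z₁‖² + ‖z₂‖² − ‖z₃‖² = Re ⟨S y, y⟩ ≥ 0` by positivity of `S`.
-/

section
variable {𝕜 E F : Type*} [RCLike 𝕜] [NormedAddCommGroup E] [InnerProductSpace 𝕜 E] [CompleteSpace E]
  [NormedAddCommGroup F] [InnerProductSpace 𝕜 F] [CompleteSpace F]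

lemma IsSelfAdjoint.range_mul_self [FiniteDimensional 𝕜 E] {T : E →L[𝕜] E}
    (hT : IsSelfAdjoint T) : Set.range ⇑(T * T) = Set.range T := by
  have hT' : (T : E →ₗ[𝕜] E).adjoint = T :=
    LinearMap.isSelfAdjoint_iff'.mp ((isSelfAdjoint_toLinearMap_iff T).mpr hT)
  have := congrArg SetLike.coe (T : E →ₗ[𝕜] E).range_self_comp_adjoint
  rwa [hT', LinearMap.coe_range, LinearMap.coe_range] at this

lemma re_inner_self_comp_adjoint_apply (A : E →L[𝕜] F) (y : F) :
    RCLike.re (inner 𝕜 ((A ∘L adjoint A) y) y) = ‖adjoint A y‖ ^ 2 := by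
  simpa using (apply_norm_sq_eq_inner_adjoint_left (adjoint A) y).symm

lemma exists_eq_add_sub_of_mem_range {T₁ T₂ T₃ : E →L[𝕜] F}
    (hpos : (T₁ ∘L adjoint T₁ + T₂ ∘L adjoint T₂ - T₃ ∘L adjoint T₃).IsPositive) {u : F}
    (hu : u ∈ Set.range (T₁ ∘L adjoint T₁ + T₂ ∘L adjoint T₂ - T₃ ∘L adjoint T₃)) :
    ∃ z₁ z₂ z₃ : E, u = T₁ z₁ + T₂ z₂ - T₃ z₃ ∧ ‖z₃‖ ^ 2 ≤ ‖z₁‖ ^ 2 + ‖z₂‖ ^ 2 := by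
  obtain ⟨y, rfl⟩ := hu
  refine ⟨adjoint T₁ y, adjoint T₂ y, adjoint T₃ y, rfl, ?_⟩
  have hre := hpos.re_inner_nonneg_left y
  simp only [sub_apply, add_apply, inner_sub_left, inner_add_left, map_sub, map_add,
    re_inner_self_comp_adjoint_apply] at hre
  linarith
end

lemma range_sqrt {E : Type*} [NormedAddCommGroup E] [InnerProductSpace ℂ E]
    [FiniteDimensional ℂ E] {S : E →L[ℂ] E} (hS : 0 ≤ S) :
    Set.range ⇑(CFC.sqrt S) = Set.range S := by
  rw [← (IsSelfAdjoint.of_nonneg (CFC.sqrt_nonneg S)).range_mul_self, CFC.sqrt_mul_sqrt_self S hS]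

theorem finite_dim_range_description_general {H : Type*} [NormedAddCommGroup H] [InnerProductSpace ℂ H]
    [FiniteDimensional ℂ H] (T₁ T₂ T₃ : H →L[ℂ] H)
    (hpos : (T₁ ∘L adjoint T₁ + T₂ ∘L adjoint T₂ - T₃ ∘L adjoint T₃).IsPositive)
    (T : H →L[ℂ] H)
    (hT : T = CFC.sqrt (T₁ ∘L adjoint T₁ + T₂ ∘L adjoint T₂ - T₃ ∘L adjoint T₃)) :
    Set.range T =
      {u : H | ∃ z₁ z₂ z₃ : H, u = T₁ z₁ + T₂ z₂ - T₃ z₃ ∧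
        0 ≤ ‖z₁‖ ^ 2 + ‖z₂‖ ^ 2 - ‖z₃‖ ^ 2} ∩ Set.range T ∧
      ∀ u ∈ Set.range T, ∃ z₁ z₂ z₃ : H,
        u = T₁ z₁ + T₂ z₂ - T₃ z₃ ∧ ‖z₃‖ ^ 2 ≤ ‖z₁‖ ^ 2 + ‖z₂‖ ^ 2 := by
  have hrange : Set.range T = Set.range (T₁ ∘L adjoint T₁ + T₂ ∘L adjoint T₂ - T₃ ∘L adjoint T₃) :=
    hT ▸ range_sqrt ((nonneg_iff_isPositive _).mpr hpos)
  have key : ∀ u ∈ Set.range T, ∃ z₁ z₂ z₃ : H,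
      u = T₁ z₁ + T₂ z₂ - T₃ z₃ ∧ ‖z₃‖ ^ 2 ≤ ‖z₁‖ ^ 2 + ‖z₂‖ ^ 2 := fun u hu =>
    exists_eq_add_sub_of_mem_range hpos (hrange ▸ hu)
  refine ⟨(Set.inter_eq_right.mpr fun u hu => ?_).symm, key⟩
  obtain ⟨z₁, z₂, z₃, rfl, hz⟩ := key u hu
  exact ⟨z₁, z₂, z₃, rfl, sub_nonneg.mpr hz⟩

/-- In finite dimensions,
`ran T = {T₁z₁ + T₂z₂ − T₃z₃ : ‖z₁‖² + ‖z₂‖² − ‖z₃‖² ≥ 0} ∩ ran T`; in particular every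
`u ∈ ran T` is of the form `T₁z₁ + T₂z₂ − T₃z₃` with `‖z₁‖² + ‖z₂‖² ≥ ‖z₃‖²`. -/
theorem finite_dim_range_description {H : Type*} [NormedAddCommGroup H] [InnerProductSpace ℂ H]
    [FiniteDimensional ℂ H] (T₁ T₂ T₃ : H →L[ℂ] H)
    (hpos : (T₁ ∘L adjoint T₁ + T₂ ∘L adjoint T₂ - T₃ ∘L adjoint T₃).IsPositive)
    (hcontr : (1 - (T₁ ∘L adjoint T₁ + T₂ ∘L adjoint T₂ - T₃ ∘L adjoint T₃)).IsPositive)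
    (T : H →L[ℂ] H)
    (hT : T = CFC.sqrt (T₁ ∘L adjoint T₁ + T₂ ∘L adjoint T₂ - T₃ ∘L adjoint T₃)) :
    Set.range T =
      {u : H | ∃ z₁ z₂ z₃ : H, u = T₁ z₁ + T₂ z₂ - T₃ z₃ ∧
        0 ≤ ‖z₁‖ ^ 2 + ‖z₂‖ ^ 2 - ‖z₃‖ ^ 2} ∩ Set.range T ∧
      ∀ u ∈ Set.range T, ∃ z₁ z₂ z₃ : H,
        u = T₁ z₁ + T₂ z₂ - T₃ z₃ ∧ ‖z₃‖ ^ 2 ≤ ‖z₁‖ ^ 2 + ‖z₂‖ ^ 2 :=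
  finite_dim_range_description_general T₁ T₂ T₃ hpos T hT
end

section
/- With the notation of the polar-decomposition setup (𝐓^♯ : L → K₀ bounded, L = (ker T)^⊥, 𝐓̃ = (𝐓^♯)*), the range of 𝐓̃ is dense in L; indeed ran 𝐓̃ ⊇ ran T². -/
/-!
On `L = (ker T)ᗮ` the hypothesis on `Φ` reads `⟪Φx, Φy⟫ = ⟪Tx, Ty⟫`, because
`T² = T₁T₁* + T₂T₂* − T₃T₃*`. Hence `Φ*Φ = T²` on `L` (the self-adjoint `T` maps into `L`), and
`T²x = Φ*Φ(Px)` for the orthogonal projection `P` onto `L`, as `x − Px ∈ ker T`. The same identity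
makes `Φ` injective (`Φx = 0` forces `x ∈ ker T ∩ L`), so `ran Φ*`, whose closure is `(ker Φ)ᗮ`,
is dense.
-/

open ContinuousLinearMap

namespace ContinuousLinearMap

variable {𝕜 E F : Type*} [RCLike 𝕜] [NormedAddCommGroup E] [InnerProductSpace 𝕜 E] [CompleteSpace E]
  [NormedAddCommGroup F] [InnerProductSpace 𝕜 F]

theorem denseRange_adjoint_of_injective [CompleteSpace F] {A : E →L[𝕜] F}
    (hA : Function.Injective A) : DenseRange (adjoint A) := by
  have hclosure := A.orthogonal_ker
  rw [LinearMap.ker_eq_bot.mpr hA, Submodule.bot_orthogonal_eq_top] at hclosure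
  have hdense := Submodule.dense_iff_topologicalClosure_eq_top.mpr hclosure.symm
  rwa [LinearMap.coe_range] at hdense

theorem _root_.IsSelfAdjoint.apply_mem_orthogonal_ker {T : E →L[𝕜] E} (hT : IsSelfAdjoint T) (x : E) :
    T x ∈ (LinearMap.ker (T : E →ₗ[𝕜] E))ᗮ := by
  rw [orthogonal_ker, hT.adjoint_eq]
  exact Submodule.le_topologicalClosure _ ⟨x, rfl⟩

theorem apply_starProjection_orthogonal_ker (T : E →L[𝕜] F) (x : E) :
    T ((LinearMap.ker (T : E →ₗ[𝕜] F))ᗮ.starProjection x) = T x := by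
  have hker := (LinearMap.ker (T : E →ₗ[𝕜] F))ᗮ.sub_starProjection_mem_orthogonal x
  rw [Submodule.orthogonal_orthogonal, LinearMap.mem_ker, coe_coe, map_sub, sub_eq_zero] at hker
  exact hker.symm

section GramIdentity

variable {T : E →L[𝕜] E} {Φ : (LinearMap.ker (T : E →ₗ[𝕜] E))ᗮ →L[𝕜] F}
  (hΦ : ∀ x y, inner 𝕜 (Φ x) (Φ y) = inner 𝕜 (T x) (T y))
include hΦ

omit [CompleteSpace E] in
theorem injective_of_inner_eq_inner_apply : Function.Injective Φ := by
  refine (injective_iff_map_eq_zero Φ).mpr fun x hx => ?_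
  have hTx : T x = 0 := by
    rw [← inner_self_eq_zero (𝕜 := 𝕜), ← hΦ, hx, inner_zero_left]
  exact Subtype.ext <| inner_self_eq_zero.mp <| x.2 x hTx

theorem adjoint_apply_apply_of_inner_eq_inner_apply [CompleteSpace F] (hT : IsSelfAdjoint T)
    (x : (LinearMap.ker (T : E →ₗ[𝕜] E))ᗮ) :
    adjoint Φ (Φ x) = ⟨T (T x), hT.apply_mem_orthogonal_ker _⟩ := by
  refine ext_inner_right 𝕜 fun z => ?_
  rw [adjoint_inner_left, hΦ, Submodule.coe_inner, Submodule.coe_mk]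
  exact (hT.isSymmetric _ _).symm

end GramIdentity

theorem inner_sqrt_apply_sqrt_apply {E : Type*} [NormedAddCommGroup E] [InnerProductSpace ℂ E]
    [CompleteSpace E] {S : E →L[ℂ] E} (hS : 0 ≤ S) (x y : E) :
    inner ℂ (CFC.sqrt S x) (CFC.sqrt S y) = inner ℂ x (S y) := by
  rw [← adjoint_inner_right, (CFC.sqrt_nonneg S).isSelfAdjoint.adjoint_eq,
    ← mul_apply_eq_comp, ← sq, CFC.sq_sqrt S hS]

end ContinuousLinearMap

theorem tilde_T_dense_range_general {H K₀ : Type*} [NormedAddCommGroup H] [InnerProductSpace ℂ H]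
    [CompleteSpace H] [NormedAddCommGroup K₀] [InnerProductSpace ℂ K₀] [CompleteSpace K₀]
    (T₁ T₂ T₃ : H →L[ℂ] H)
    (hpos : (T₁ ∘L adjoint T₁ + T₂ ∘L adjoint T₂ - T₃ ∘L adjoint T₃).IsPositive)
    (T : H →L[ℂ] H)
    (hT : T = CFC.sqrt (T₁ ∘L adjoint T₁ + T₂ ∘L adjoint T₂ - T₃ ∘L adjoint T₃))
    (Φ : ((LinearMap.ker (T : H →ₗ[ℂ] H))ᗮ : Submodule ℂ H) →L[ℂ] K₀)
    (hΦinner : ∀ x y : (LinearMap.ker (T : H →ₗ[ℂ] H))ᗮ,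
      (inner ℂ (Φ x) (Φ y) : ℂ) =
        inner ℂ (adjoint T₁ (x : H)) (adjoint T₁ (y : H))
          + inner ℂ (adjoint T₂ (x : H)) (adjoint T₂ (y : H))
          - inner ℂ (adjoint T₃ (x : H)) (adjoint T₃ (y : H))) :
    DenseRange (adjoint Φ) ∧
      ∀ x : H, ∃ k : K₀, ((adjoint Φ k : (LinearMap.ker (T : H →ₗ[ℂ] H))ᗮ) : H) = T (T x) := by
  have hTsa : IsSelfAdjoint T := hT ▸ (CFC.sqrt_nonneg _).isSelfAdjoint
  have hsq : ∀ x y : H, inner ℂ (T x) (T y) =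
      inner ℂ x ((T₁ ∘L adjoint T₁ + T₂ ∘L adjoint T₂ - T₃ ∘L adjoint T₃) y) :=
    hT ▸ inner_sqrt_apply_sqrt_apply ((nonneg_iff_isPositive _).mpr hpos)
  have hgram : ∀ x y : (LinearMap.ker (T : H →ₗ[ℂ] H))ᗮ,
      inner ℂ (Φ x) (Φ y) = inner ℂ (T x) (T y) := by
    intro x y
    simp only [hΦinner, hsq, add_apply, sub_apply, comp_apply, inner_add_right, inner_sub_right,
      adjoint_inner_left]
  refine ⟨denseRange_adjoint_of_injective (injective_of_inner_eq_inner_apply hgram),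
    fun x => ⟨Φ ((LinearMap.ker (T : H →ₗ[ℂ] H))ᗮ.orthogonalProjectionOnto x), ?_⟩⟩
  rw [adjoint_apply_apply_of_inner_eq_inner_apply hgram hTsa, Submodule.coe_mk,
    ← Submodule.starProjection_apply, apply_starProjection_orthogonal_ker]

/-- In the polar-decomposition setup (`Φ = 𝐓^♯ : L → K₀` bounded with dense range,
`L = (ker T)ᗮ`, `‖Φx‖ = ‖Tx‖`, `𝐓̃ = Φ^*`), the range of `𝐓̃` is dense in `L`, and indeed
`ran 𝐓̃ ⊇ ran T²`. -/
theorem tilde_T_dense_range {H K₀ : Type*} [NormedAddCommGroup H] [InnerProductSpace ℂ H]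
    [CompleteSpace H] [NormedAddCommGroup K₀] [InnerProductSpace ℂ K₀] [CompleteSpace K₀]
    (T₁ T₂ T₃ : H →L[ℂ] H)
    (hpos : (T₁ ∘L adjoint T₁ + T₂ ∘L adjoint T₂ - T₃ ∘L adjoint T₃).IsPositive)
    (hcontr : (1 - (T₁ ∘L adjoint T₁ + T₂ ∘L adjoint T₂ - T₃ ∘L adjoint T₃)).IsPositive)
    (T : H →L[ℂ] H)
    (hT : T = CFC.sqrt (T₁ ∘L adjoint T₁ + T₂ ∘L adjoint T₂ - T₃ ∘L adjoint T₃))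
    (Φ : ((LinearMap.ker (T : H →ₗ[ℂ] H))ᗮ : Submodule ℂ H) →L[ℂ] K₀)
    (hΦnorm : ∀ x : (LinearMap.ker (T : H →ₗ[ℂ] H))ᗮ, ‖Φ x‖ = ‖T (x : H)‖)
    (hΦinner : ∀ x y : (LinearMap.ker (T : H →ₗ[ℂ] H))ᗮ,
      (inner ℂ (Φ x) (Φ y) : ℂ) =
        inner ℂ (adjoint T₁ (x : H)) (adjoint T₁ (y : H))
          + inner ℂ (adjoint T₂ (x : H)) (adjoint T₂ (y : H))
          - inner ℂ (adjoint T₃ (x : H)) (adjoint T₃ (y : H)))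
    (hdense : DenseRange Φ) :
    DenseRange (adjoint Φ) ∧
      ∀ x : H, ∃ k : K₀, ((adjoint Φ k : (LinearMap.ker (T : H →ₗ[ℂ] H))ᗮ) : H) = T (T x) :=
  tilde_T_dense_range_general T₁ T₂ T₃ hpos T hT Φ hΦinner
end

section
/- Let T₁, T₂, T₃ ∈ B(H) with 0 ≤ T₁T₁* + T₂T₂* − T₃T₃* ≤ I and T the positive square root. For v in the de Branges–Rovnyak complement H(T) = M((I − TT*)^{1/2}) and ε > 0, there exists (w₀(ε), w₁(ε), w₂(ε), w₃(ε)) ∈ H⁴ such that w₀(ε) − T₁w₁(ε) − T₂w₂(ε) + T₃w₃(ε) → v strongly as ε → 0, and 0 ≤ ‖w₀(ε)‖² − ‖w₁(ε)‖² − ‖w₂(ε)‖² + ‖w₃(ε)‖² increases to ‖v‖²_{H(T)} as ε ↓ 0. -/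
/-!
Put `B = 1 - TT* = 1 - (T₁T₁* + T₂T₂* - T₃T₃*) ≥ 0` and write `v = B^{1/2} y₀` with `y₀ ⊥ ker B`,
the preimage of least norm, so that `‖v‖_{H(T)} = ‖y₀‖`. Take `w₀(ε) = B^{1/2} (B + ε)⁻¹ y₀` and
`wᵢ(ε) = Tᵢ* w₀(ε)`. Then `w₀ - T₁w₁ - T₂w₂ + T₃w₃ = B w₀ = B^{1/2} Q_ε y₀` and the indefinite
quadratic expression is `⟪B w₀, w₀⟫ = ‖Q_ε y₀‖²`, where `Q_ε = B (B + ε)⁻¹`. The `Q_ε` are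
contractions converging strongly to `1` on `closure (range B) = (ker B)ᗮ`, and `‖Q_ε y₀‖`
decreases in `ε` because `t / (t + ε)` does.
-/

open ContinuousLinearMap Filter Topology
open scoped InnerProductSpace

namespace ContinuousLinearMap

section

variable {𝕜 E F : Type*} [RCLike 𝕜] [NormedAddCommGroup E] [InnerProductSpace 𝕜 E]
  [NormedAddCommGroup F] [InnerProductSpace 𝕜 F]

theorem exists_mem_orthogonal_ker_apply_eq [CompleteSpace E] (S : E →L[𝕜] F) (y : E) :
    ∃ y₀ ∈ S.kerᗮ, S y₀ = S y := by
  have : CompleteSpace S.ker := S.isClosed_ker.completeSpace_coe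
  refine ⟨y - S.ker.starProjection y, S.ker.sub_starProjection_mem_orthogonal y, ?_⟩
  have : S (S.ker.starProjection y) = 0 := S.ker.starProjection_apply_mem y
  rw [map_sub, this, sub_zero]

theorem norm_le_of_mem_orthogonal_ker {S : E →L[𝕜] F} {y₀ : E} (hy₀ : y₀ ∈ S.kerᗮ) {y : E}
    (hy : S y = S y₀) : ‖y₀‖ ≤ ‖y‖ := by
  have hker : y - y₀ ∈ S.ker := by simp [hy]
  have horth : ⟪y₀, y - y₀⟫_𝕜 = 0 := Submodule.inner_left_of_mem_orthogonal hker hy₀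
  have hpyth : ‖y‖ * ‖y‖ = ‖y₀‖ * ‖y₀‖ + ‖y - y₀‖ * ‖y - y₀‖ := by
    simpa using norm_add_sq_eq_norm_sq_add_norm_sq_of_inner_eq_zero y₀ (y - y₀) horth
  nlinarith [norm_nonneg y, norm_nonneg y₀, norm_nonneg (y - y₀)]

theorem sInf_norm_preimage_eq {S : E →L[𝕜] F} {y₀ : E} (hy₀ : y₀ ∈ S.kerᗮ) :
    sInf {r : ℝ | ∃ y : E, S y = S y₀ ∧ r = ‖y‖} = ‖y₀‖ := by
  refine IsLeast.csInf_eq ⟨⟨y₀, rfl, rfl⟩, ?_⟩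
  rintro _ ⟨y, hy, rfl⟩
  exact norm_le_of_mem_orthogonal_ker hy₀ hy

theorem tendsto_apply_of_mem_closure {ι : Type*} {l : Filter ι} {F : ι → E →L[𝕜] E} {C : ℝ}
    (hF : ∀ᶠ i in l, ‖F i‖ ≤ C) {s : Set E} (hs : ∀ y ∈ s, Tendsto (fun i => F i y) l (𝓝 y))
    {x : E} (hx : x ∈ closure s) : Tendsto (fun i => F i x) l (𝓝 x) := by
  rw [Metric.tendsto_nhds]
  intro δ hδ
  have hC : 0 < |C| + 1 := by positivity
  obtain ⟨y, hys, hxy⟩ := Metric.mem_closure_iff.mp hx (δ / 2 / (|C| + 1)) (by positivity)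
  filter_upwards [hF, Metric.tendsto_nhds.mp (hs y hys) (δ / 2) (by positivity)] with i hFi hi
  have hFxy : dist (F i x) (F i y) ≤ |C| * dist x y := by
    rw [dist_eq_norm, dist_eq_norm, ← map_sub]
    exact (le_opNorm _ _).trans (by gcongr; exact hFi.trans (le_abs_self C))
  have hη : (|C| + 1) * dist x y < δ / 2 := by
    rwa [lt_div_iff₀ hC, mul_comm] at hxy
  calc dist (F i x) x ≤ dist (F i x) (F i y) + dist (F i y) y + dist y x := dist_triangle4 _ _ _ _
    _ < δ := by rw [dist_comm y x]; linarith

end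

variable {H : Type*} [NormedAddCommGroup H] [InnerProductSpace ℂ H] [CompleteSpace H]
  {B : H →L[ℂ] H}

theorem norm_cfc_apply_le_of_abs_le (hB : IsSelfAdjoint B) {f g : ℝ → ℝ}
    (hf : ContinuousOn f (spectrum ℝ B)) (hg : ContinuousOn g (spectrum ℝ B))
    (hfg : ∀ t ∈ spectrum ℝ B, |f t| ≤ |g t|) (y : H) : ‖cfc f B y‖ ≤ ‖cfc g B y‖ := by
  have norm_sq : ∀ h : ℝ → ℝ, ContinuousOn h (spectrum ℝ B) →
      ‖cfc h B y‖ ^ 2 = RCLike.re ⟪cfc (fun t => h t ^ 2) B y, y⟫_ℂ := fun h hh => by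
    rw [apply_norm_sq_eq_inner_adjoint_left, (cfc_predicate h B).adjoint_eq, cfc_pow h 2 B hh,
      pow_two]
    rfl
  have hle : cfc (fun t => f t ^ 2) B ≤ cfc (fun t => g t ^ 2) B :=
    cfc_mono (fun t ht => sq_le_sq.mpr (hfg t ht)) (hf.pow 2) (hg.pow 2)
  have := ((le_def _ _).mp hle).re_inner_nonneg_left y
  rw [sub_apply, inner_sub_left, map_sub, sub_nonneg, ← norm_sq f hf, ← norm_sq g hg] at this
  exact (pow_le_pow_iff_left₀ (norm_nonneg _) (norm_nonneg _) two_ne_zero).mp this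

theorem ker_sqrt (hB : 0 ≤ B) : (CFC.sqrt B).ker = B.ker := by
  have hS : IsSelfAdjoint (CFC.sqrt B) := .of_nonneg (CFC.sqrt_nonneg B)
  rw [← ker_adjoint_comp_self, hS.adjoint_eq, ← mul_def, CFC.sqrt_mul_sqrt_self B hB]

theorem sqrt_comp_adjoint_sqrt (hB : 0 ≤ B) : CFC.sqrt B ∘L adjoint (CFC.sqrt B) = B := by
  rw [(IsSelfAdjoint.of_nonneg (CFC.sqrt_nonneg B)).adjoint_eq, ← mul_def]
  exact CFC.sqrt_mul_sqrt_self B hB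

theorem sqrt_apply_sqrt_apply (hB : 0 ≤ B) (x : H) : CFC.sqrt B (CFC.sqrt B x) = B x :=
  congrArg (fun C : H →L[ℂ] H => C x) (CFC.sqrt_mul_sqrt_self B hB)

theorem norm_sqrt_apply_sq (hB : 0 ≤ B) (z : H) :
    ‖CFC.sqrt B z‖ ^ 2 = RCLike.re ⟪B z, z⟫_ℂ := by
  have hS : IsSelfAdjoint (CFC.sqrt B) := .of_nonneg (CFC.sqrt_nonneg B)
  rw [apply_norm_sq_eq_inner_adjoint_left, hS.adjoint_eq]
  exact congrArg (fun A : H →L[ℂ] H => RCLike.re ⟪A z, z⟫_ℂ) (CFC.sqrt_mul_sqrt_self B hB)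

variable {ε : ℝ}

theorem continuousOn_div_add_spectrum (hB : 0 ≤ B) (hε : 0 < ε) {f : ℝ → ℝ}
    (hf : Continuous f) : ContinuousOn (fun t => f t / (t + ε)) (spectrum ℝ B) :=
  hf.continuousOn.div (by fun_prop) fun t ht => by
    have := spectrum_nonneg_of_nonneg hB ht
    positivity

theorem norm_cfc_div_add_le_one (hB : 0 ≤ B) (hε : 0 < ε) :
    ‖cfc (fun t : ℝ => t / (t + ε)) B‖ ≤ 1 :=
  norm_cfc_le zero_le_one fun t ht => by
    have := spectrum_nonneg_of_nonneg hB ht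
    rw [Real.norm_of_nonneg (by positivity), div_le_one (by positivity)]
    linarith

theorem norm_cfc_div_add_apply_sub_le (hB : 0 ≤ B) (hε : 0 < ε) (x : H) :
    ‖cfc (fun t : ℝ => t / (t + ε)) B (B x) - B x‖ ≤ ε * ‖x‖ := by
  have hq : ContinuousOn (fun t : ℝ => t / (t + ε)) (spectrum ℝ B) :=
    continuousOn_div_add_spectrum hB hε continuous_id
  have hcfc : cfc (fun t : ℝ => t / (t + ε) * t - t) B
      = -(ε • cfc (fun t : ℝ => t / (t + ε)) B) := by
    rw [← cfc_const_mul _ _ B hq, ← cfc_neg]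
    exact cfc_congr fun t ht => by
      have := spectrum_nonneg_of_nonneg hB ht
      field_simp
      ring
  rw [cfc_sub (fun t : ℝ => t / (t + ε) * t) (fun t : ℝ => t) B (hq.mul (by fun_prop)),
    cfc_mul (fun t : ℝ => t / (t + ε)) (fun t : ℝ => t) B hq, cfc_id' ℝ B] at hcfc
  calc ‖cfc (fun t : ℝ => t / (t + ε)) B (B x) - B x‖
      = ‖(-(ε • cfc (fun t : ℝ => t / (t + ε)) B)) x‖ := by rw [← hcfc]; rfl
    _ ≤ ε * ‖x‖ := by
      refine (le_opNorm _ _).trans (mul_le_mul_of_nonneg_right ?_ (norm_nonneg x))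
      rw [norm_neg, norm_smul, Real.norm_of_nonneg hε.le]
      exact mul_le_of_le_one_right hε.le (norm_cfc_div_add_le_one hB hε)

theorem sqrt_apply_cfc_sqrt_div_add (hB : 0 ≤ B) (hε : 0 < ε) (y : H) :
    CFC.sqrt B (cfc (fun t : ℝ => √t / (t + ε)) B y) = cfc (fun t : ℝ => t / (t + ε)) B y := by
  have h : cfc Real.sqrt B * cfc (fun t : ℝ => √t / (t + ε)) B
      = cfc (fun t : ℝ => t / (t + ε)) B := by
    rw [← cfc_mul _ _ B (by fun_prop) (continuousOn_div_add_spectrum hB hε Real.continuous_sqrt)]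
    exact cfc_congr fun t ht => by
      rw [← mul_div_assoc, Real.mul_self_sqrt (spectrum_nonneg_of_nonneg hB ht)]
  rw [CFC.sqrt_eq_real_sqrt B hB, cfcₙ_eq_cfc, ← h]
  rfl

theorem tendsto_cfc_div_add_apply (hB : 0 ≤ B) {y : H} (hy : y ∈ B.kerᗮ) :
    Tendsto (fun ε : ℝ => cfc (fun t : ℝ => t / (t + ε)) B y) (𝓝[>] 0) (𝓝 y) := by
  rw [orthogonal_ker, (IsSelfAdjoint.of_nonneg hB).adjoint_eq, ← SetLike.mem_coe,
    Submodule.topologicalClosure_coe] at hy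
  refine tendsto_apply_of_mem_closure
    (eventually_nhdsWithin_of_forall fun ε hε => norm_cfc_div_add_le_one hB hε) ?_ hy
  rintro _ ⟨x, rfl⟩
  have hlim : Tendsto (fun ε : ℝ => ε * ‖x‖) (𝓝[>] 0) (𝓝 0) := by
    simpa using ((continuous_id.mul continuous_const).tendsto (0 : ℝ)).mono_left
      nhdsWithin_le_nhds (f := fun ε : ℝ => ε * ‖x‖)
  exact tendsto_iff_norm_sub_tendsto_zero.mpr <| squeeze_zero' (.of_forall fun _ => norm_nonneg _)
    (eventually_nhdsWithin_of_forall fun ε hε => norm_cfc_div_add_apply_sub_le hB hε x) hlim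

theorem norm_cfc_div_add_apply_le (hB : 0 ≤ B) {ε₁ ε₂ : ℝ} (hε₁ : 0 < ε₁) (h : ε₁ ≤ ε₂)
    (y : H) : ‖cfc (fun t : ℝ => t / (t + ε₂)) B y‖ ≤ ‖cfc (fun t : ℝ => t / (t + ε₁)) B y‖ := by
  have hε₂ : 0 < ε₂ := hε₁.trans_le h
  refine norm_cfc_apply_le_of_abs_le (.of_nonneg hB)
    (continuousOn_div_add_spectrum hB hε₂ continuous_id)
    (continuousOn_div_add_spectrum hB hε₁ continuous_id) (fun t ht => ?_) y
  have := spectrum_nonneg_of_nonneg hB ht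
  rw [abs_of_nonneg (by positivity), abs_of_nonneg (by positivity)]
  gcongr

theorem sub_apply_adjoint_apply_eq (T₁ T₂ T₃ : H →L[ℂ] H) (z : H) :
    z - T₁ (adjoint T₁ z) - T₂ (adjoint T₂ z) + T₃ (adjoint T₃ z)
      = (1 - (T₁ ∘L adjoint T₁ + T₂ ∘L adjoint T₂ - T₃ ∘L adjoint T₃)) z := by
  simp only [sub_apply, add_apply, one_apply_eq_self, comp_apply]
  abel

theorem norm_sq_sub_norm_adjoint_apply_sq_eq (T₁ T₂ T₃ : H →L[ℂ] H) (z : H) :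
    ‖z‖ ^ 2 - ‖adjoint T₁ z‖ ^ 2 - ‖adjoint T₂ z‖ ^ 2 + ‖adjoint T₃ z‖ ^ 2
      = RCLike.re ⟪(1 - (T₁ ∘L adjoint T₁ + T₂ ∘L adjoint T₂ - T₃ ∘L adjoint T₃)) z, z⟫_ℂ := by
  have h : ∀ C : H →L[ℂ] H, ‖adjoint C z‖ ^ 2 = RCLike.re ⟪(C ∘L adjoint C) z, z⟫_ℂ := fun C => by
    rw [apply_norm_sq_eq_inner_adjoint_left, adjoint_adjoint]
  simp only [h, sub_apply, add_apply, inner_sub_left, inner_add_left, map_sub, map_add,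
    ← inner_self_eq_norm_sq (𝕜 := ℂ)]
  rw [one_apply_eq_self]
  ring

end ContinuousLinearMap

/-- For `v` in the de Branges–Rovnyak complement `H(T) = M((I − TT^*)^{1/2})`, there are vectors
`(w₀(ε), w₁(ε), w₂(ε), w₃(ε))` with
`w₀(ε) − T₁w₁(ε) − T₂w₂(ε) + T₃w₃(ε) → v` as `ε → 0` and
`0 ≤ ‖w₀(ε)‖² − ‖w₁(ε)‖² − ‖w₂(ε)‖² + ‖w₃(ε)‖²` increasing to `‖v‖²_{H(T)}` as `ε ↓ 0`. -/
theorem complement_range_inclusion {H : Type*} [NormedAddCommGroup H] [InnerProductSpace ℂ H]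
    [CompleteSpace H] (T₁ T₂ T₃ : H →L[ℂ] H)
    (hpos : (T₁ ∘L adjoint T₁ + T₂ ∘L adjoint T₂ - T₃ ∘L adjoint T₃).IsPositive)
    (hcontr : (1 - (T₁ ∘L adjoint T₁ + T₂ ∘L adjoint T₂ - T₃ ∘L adjoint T₃)).IsPositive)
    (T : H →L[ℂ] H)
    (hT : T = CFC.sqrt (T₁ ∘L adjoint T₁ + T₂ ∘L adjoint T₂ - T₃ ∘L adjoint T₃))
    (S : H →L[ℂ] H) (hS : S = CFC.sqrt (1 - T ∘L adjoint T))
    (v : H) (hv : v ∈ Set.range S) :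
    ∃ w₀ w₁ w₂ w₃ : ℝ → H,
      Tendsto (fun ε => w₀ ε - T₁ (w₁ ε) - T₂ (w₂ ε) + T₃ (w₃ ε))
        (nhdsWithin 0 (Set.Ioi 0)) (nhds v) ∧
      (∀ ε : ℝ, 0 < ε →
        0 ≤ ‖w₀ ε‖ ^ 2 - ‖w₁ ε‖ ^ 2 - ‖w₂ ε‖ ^ 2 + ‖w₃ ε‖ ^ 2) ∧
      (∀ ε₁ ε₂ : ℝ, 0 < ε₁ → ε₁ ≤ ε₂ →
        ‖w₀ ε₂‖ ^ 2 - ‖w₁ ε₂‖ ^ 2 - ‖w₂ ε₂‖ ^ 2 + ‖w₃ ε₂‖ ^ 2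
          ≤ ‖w₀ ε₁‖ ^ 2 - ‖w₁ ε₁‖ ^ 2 - ‖w₂ ε₁‖ ^ 2 + ‖w₃ ε₁‖ ^ 2) ∧
      Tendsto (fun ε => ‖w₀ ε‖ ^ 2 - ‖w₁ ε‖ ^ 2 - ‖w₂ ε‖ ^ 2 + ‖w₃ ε‖ ^ 2)
        (nhdsWithin 0 (Set.Ioi 0))
        (nhds ((sInf {r : ℝ | ∃ y : H, S y = v ∧ r = ‖y‖}) ^ 2)) := by
  set A := T₁ ∘L adjoint T₁ + T₂ ∘L adjoint T₂ - T₃ ∘L adjoint T₃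
  have hB : 0 ≤ 1 - A := (nonneg_iff_isPositive _).mpr hcontr
  rw [hT, sqrt_comp_adjoint_sqrt ((nonneg_iff_isPositive A).mpr hpos)] at hS
  subst hS
  obtain ⟨y, rfl⟩ := hv
  obtain ⟨y₀, hy₀, hSy₀⟩ := exists_mem_orthogonal_ker_apply_eq (CFC.sqrt (1 - A)) y
  rw [← hSy₀, sInf_norm_preimage_eq hy₀]
  rw [ker_sqrt hB] at hy₀
  set z := fun ε : ℝ => cfc (fun t : ℝ => √t / (t + ε)) (1 - A) y₀
  set Q := fun ε : ℝ => cfc (fun t : ℝ => t / (t + ε)) (1 - A) y₀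
  have hz : ∀ ε > 0, CFC.sqrt (1 - A) (z ε) = Q ε := fun ε hε =>
    sqrt_apply_cfc_sqrt_div_add hB hε y₀
  have hval : ∀ ε > 0, ‖z ε‖ ^ 2 - ‖adjoint T₁ (z ε)‖ ^ 2 - ‖adjoint T₂ (z ε)‖ ^ 2
      + ‖adjoint T₃ (z ε)‖ ^ 2 = ‖Q ε‖ ^ 2 := fun ε hε => by
    rw [norm_sq_sub_norm_adjoint_apply_sq_eq, ← norm_sqrt_apply_sq hB, hz ε hε]
  have hres : ∀ ε > 0, z ε - T₁ (adjoint T₁ (z ε)) - T₂ (adjoint T₂ (z ε)) + T₃ (adjoint T₃ (z ε))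
      = CFC.sqrt (1 - A) (Q ε) := fun ε hε => by
    rw [sub_apply_adjoint_apply_eq, ← hz ε hε, sqrt_apply_sqrt_apply hB]
  have hQ := tendsto_cfc_div_add_apply hB hy₀
  refine ⟨z, fun ε => adjoint T₁ (z ε), fun ε => adjoint T₂ (z ε), fun ε => adjoint T₃ (z ε),
    ?_, fun ε hε => ?_, fun ε₁ ε₂ hε₁ h => ?_, ?_⟩
  · exact (((CFC.sqrt (1 - A)).continuous.tendsto y₀).comp hQ).congr'
      (eventually_nhdsWithin_of_forall fun ε hε => (hres ε hε).symm)
  · rw [hval ε hε]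
    positivity
  · rw [hval ε₁ hε₁, hval ε₂ (hε₁.trans_le h)]
    exact pow_le_pow_left₀ (norm_nonneg _) (norm_cfc_div_add_apply_le hB hε₁ h y₀) 2
  · exact (((continuous_norm.tendsto y₀).comp hQ).pow 2).congr'
      (eventually_nhdsWithin_of_forall fun ε hε => (hval ε hε).symm)
end

section
/- Let φ₁, φ₂, ψ₁, ψ₂ ∈ H^∞ with ‖(T_{φ₁}, T_{φ₂})‖ ≤ 1 as a row operator and ‖(T_{ψ₁}; T_{ψ₂})‖ ≤ 1 as a column operator, and set φ₃ = φ₁ψ₁ + φ₂ψ₂. Then 0 ≤ T_{φ₁}T_{φ₁}* + T_{φ₂}T_{φ₂}* − T_{φ₃}T_{φ₃}* ≤ I on the Hardy space H². -/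
set_option synthInstance.maxHeartbeats 800000
set_option maxHeartbeats 1000000

open ContinuousLinearMap

/-- The Hardy space `H²` over the unit disk, modelled as `ℓ²(ℕ)` via Taylor coefficients. -/
abbrev HardySpace : Type := lp (fun _ : ℕ => ℂ) 2

/-- `A` is the analytic Toeplitz (multiplication) operator on `H² = ℓ²(ℕ)` whose symbol is the
bounded analytic function with Taylor coefficient sequence `a`. -/
def IsToeplitz (a : ℕ → ℂ) (A : HardySpace →L[ℂ] HardySpace) : Prop :=
  ∀ (f : HardySpace) (n : ℕ), (A f) n = ∑ k ∈ Finset.range (n + 1), a k * f (n - k)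

/-!
Writing `R` for the row `(A₁ A₂)` and `C` for the column `(B₁; B₂)`, associativity and
distributivity of the Cauchy product give `A₃ = R C`, while `R R* = A₁A₁* + A₂A₂*`. Hence the
operator in question is `R R* - R C C* R* = R (1 - C C*) R*`, and its complement to the identity
is `(1 - R R*) + (R C)(R C)*`; both are positive because `R` and `C` are contractions.
-/

open PowerSeries in
theorem sum_range_cauchy_product_assoc (a b f : ℕ → ℂ) (n : ℕ) :
    ∑ k ∈ Finset.range (n + 1), a k * ∑ j ∈ Finset.range (n - k + 1), b j * f (n - k - j)
      = ∑ m ∈ Finset.range (n + 1),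
          (∑ j ∈ Finset.range (m + 1), a j * b (m - j)) * f (n - m) := by
  have h := congrArg (coeff n)
    (mul_assoc (PowerSeries.mk a) (PowerSeries.mk b) (PowerSeries.mk f))
  simp only [coeff_mul, coeff_mk, Finset.Nat.sum_antidiagonal_eq_sum_range_succ_mk] at h
  exact h.symm

namespace IsToeplitz

variable {a b : ℕ → ℂ} {A B : HardySpace →L[ℂ] HardySpace}

theorem unique (hA : IsToeplitz a A) (hB : IsToeplitz a B) : A = B := by
  ext f n
  rw [hA, hB]

theorem add (hA : IsToeplitz a A) (hB : IsToeplitz b B) :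
    IsToeplitz (fun n => a n + b n) (A + B) := by
  intro f n
  simp only [add_apply, lp.coeFn_add, Pi.add_apply, hA f n, hB f n, add_mul,
    Finset.sum_add_distrib]

theorem comp (hA : IsToeplitz a A) (hB : IsToeplitz b B) :
    IsToeplitz (fun n => ∑ j ∈ Finset.range (n + 1), a j * b (n - j)) (A ∘L B) := by
  intro f n
  rw [comp_apply, hA, ← sum_range_cauchy_product_assoc]
  exact Finset.sum_congr rfl fun k _ => by rw [hB]

end IsToeplitz

section RowOperator

variable {𝕜 E₁ E₂ F : Type*} [RCLike 𝕜]
  [NormedAddCommGroup E₁] [InnerProductSpace 𝕜 E₁] [CompleteSpace E₁]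
  [NormedAddCommGroup E₂] [InnerProductSpace 𝕜 E₂] [CompleteSpace E₂]
  [NormedAddCommGroup F] [InnerProductSpace 𝕜 F] [CompleteSpace F]

theorem adjoint_apply_of_apply_eq_fst_add_snd {R : WithLp 2 (E₁ × E₂) →L[𝕜] F} {A₁ : E₁ →L[𝕜] F}
    {A₂ : E₂ →L[𝕜] F} (hR : ∀ x, R x = A₁ (WithLp.equiv 2 (E₁ × E₂) x).1
      + A₂ (WithLp.equiv 2 (E₁ × E₂) x).2) (y : F) :
    adjoint R y = WithLp.toLp 2 (adjoint A₁ y, adjoint A₂ y) := by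
  refine ext_inner_right 𝕜 fun x => ?_
  rw [adjoint_inner_left, hR, inner_add_right, WithLp.prod_inner_apply, adjoint_inner_left,
    adjoint_inner_left]
  rfl

theorem comp_adjoint_of_apply_eq_fst_add_snd {R : WithLp 2 (E₁ × E₂) →L[𝕜] F} {A₁ : E₁ →L[𝕜] F}
    {A₂ : E₂ →L[𝕜] F} (hR : ∀ x, R x = A₁ (WithLp.equiv 2 (E₁ × E₂) x).1
      + A₂ (WithLp.equiv 2 (E₁ × E₂) x).2) :
    R ∘L adjoint R = A₁ ∘L adjoint A₁ + A₂ ∘L adjoint A₂ := by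
  ext y
  rw [comp_apply, adjoint_apply_of_apply_eq_fst_add_snd hR, hR]
  rfl

end RowOperator

theorem isPositive_one_sub_comp_adjoint {𝕜 E F : Type*} [RCLike 𝕜]
    [NormedAddCommGroup E] [InnerProductSpace 𝕜 E] [CompleteSpace E]
    [NormedAddCommGroup F] [InnerProductSpace 𝕜 F] [CompleteSpace F]
    {T : E →L[𝕜] F} (hT : ‖T‖ ≤ 1) : (1 - T ∘L adjoint T).IsPositive := by
  refine isPositive_def'.mpr ⟨?_, fun x => ?_⟩
  · exact (IsSelfAdjoint.one _).sub (isPositive_self_comp_adjoint T).isSelfAdjoint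
  · have hx : ‖adjoint T x‖ ≤ ‖x‖ :=
      ((adjoint T).le_of_opNorm_le (by simpa using hT) x).trans_eq (one_mul _)
    rw [reApplyInnerSelf, sub_apply, one_apply_eq_self, comp_apply, inner_sub_left,
      ← adjoint_inner_right, map_sub, inner_self_eq_norm_sq, inner_self_eq_norm_sq]
    exact sub_nonneg.mpr (pow_le_pow_left₀ (norm_nonneg _) hx 2)

/-- If `φ₁, φ₂, ψ₁, ψ₂ ∈ H^∞` with `‖(T_{φ₁} T_{φ₂})‖ ≤ 1` (row) and `‖(T_{ψ₁}; T_{ψ₂})‖ ≤ 1`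
(column), and `φ₃ = φ₁ψ₁ + φ₂ψ₂` (so its coefficients are the convolutions), then
`0 ≤ T_{φ₁}T_{φ₁}^* + T_{φ₂}T_{φ₂}^* − T_{φ₃}T_{φ₃}^* ≤ I` on `H²`. -/
theorem toeplitz_corona_triplet (a₁ a₂ b₁ b₂ : ℕ → ℂ)
    (A₁ A₂ B₁ B₂ A₃ : HardySpace →L[ℂ] HardySpace)
    (hA₁ : IsToeplitz a₁ A₁) (hA₂ : IsToeplitz a₂ A₂)
    (hB₁ : IsToeplitz b₁ B₁) (hB₂ : IsToeplitz b₂ B₂)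
    (hA₃ : IsToeplitz
      (fun n => ∑ j ∈ Finset.range (n + 1), (a₁ j * b₁ (n - j) + a₂ j * b₂ (n - j))) A₃)
    (R : WithLp 2 (HardySpace × HardySpace) →L[ℂ] HardySpace)
    (hR : ∀ x : WithLp 2 (HardySpace × HardySpace),
      R x = A₁ (WithLp.equiv 2 (HardySpace × HardySpace) x).1
          + A₂ (WithLp.equiv 2 (HardySpace × HardySpace) x).2)
    (hRnorm : ‖R‖ ≤ 1)
    (C : HardySpace →L[ℂ] WithLp 2 (HardySpace × HardySpace))
    (hC : ∀ f : HardySpace, WithLp.equiv 2 (HardySpace × HardySpace) (C f) = (B₁ f, B₂ f))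
    (hCnorm : ‖C‖ ≤ 1) :
    (A₁ ∘L adjoint A₁ + A₂ ∘L adjoint A₂ - A₃ ∘L adjoint A₃).IsPositive ∧
      (1 - (A₁ ∘L adjoint A₁ + A₂ ∘L adjoint A₂ - A₃ ∘L adjoint A₃)).IsPositive := by
  have hRC : R ∘L C = A₁ ∘L B₁ + A₂ ∘L B₂ := by
    ext f : 1
    simp [hR, hC]
  have hA₃RC : A₃ = R ∘L C := by
    rw [hRC]
    refine hA₃.unique ?_
    simpa only [Finset.sum_add_distrib] using (hA₁.comp hB₁).add (hA₂.comp hB₂)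
  rw [← comp_adjoint_of_apply_eq_fst_add_snd hR, hA₃RC, adjoint_comp]
  constructor
  · convert (isPositive_one_sub_comp_adjoint hCnorm).conj_adjoint R using 1
    simp only [comp_sub, sub_comp, one_def, id_comp, comp_assoc]
  · convert (isPositive_one_sub_comp_adjoint hRnorm).add (isPositive_self_comp_adjoint (R ∘L C))
      using 1
    rw [adjoint_comp, comp_assoc]
    abel
end
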